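/- arXiv:quant-ph/0401062 — 10 statements merged into one kernel-verified Lean document; each statement's English description precedes it below -/
import Mathlib

section
/- Let p be an even integer with p ≥ 4 and let A be a real n×n matrix such that ‖Ax‖_p = ‖x‖_p for all x ∈ ℝ^n. Then A is a signed permutation matrix. -/
open Polynomial in
lemma coeff_two_aux {p : ℕ} (hp4 : 4 ≤ p) (a b : ℝ) :
    ((Polynomial.C a + Polynomial.C b * Polynomial.X) ^ p).coeff 2
      = a ^ (p - 2) * b ^ 2 * (p.choose (p - 2) : ℝ) := by
  rw [add_pow, Polynomial.finset_sum_coeff]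
  rw [Finset.sum_eq_single (p - 2)]
  · have h2 : p - (p - 2) = 2 := by omega
    rw [mul_pow, h2, ← C_pow, ← C_pow, ← C_eq_natCast]
    rw [show C (a ^ (p-2)) * (C (b^2) * X ^ 2) * C ((p.choose (p-2) : ℝ))
        = C (a ^ (p-2) * b ^ 2 * (p.choose (p-2) : ℝ)) * X ^ 2 by
          rw [C_mul, C_mul]; ring]
    rw [coeff_C_mul_X_pow]
    simp
  · intro m hm hne
    have hpm : p - m ≠ 2 := by simp only [Finset.mem_range] at hm; omega
    rw [mul_pow, ← C_pow, ← C_pow, ← C_eq_natCast]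
    rw [show C (a ^ m) * (C (b ^ (p - m)) * X ^ (p - m)) * C ((p.choose m : ℝ))
        = C (a ^ m * b ^ (p - m) * (p.choose m : ℝ)) * X ^ (p - m) by
          rw [C_mul, C_mul]; ring]
    rw [coeff_C_mul_X_pow]
    simp [Ne.symm hpm]
  · intro h
    exact absurd (Finset.mem_range.mpr (by omega)) h

/-- The `p`-norm of a real vector: `‖x‖_p = (Σ_j |x_j|^p)^(1/p)` (real exponents). -/
noncomputable def pNorm {n : ℕ} (p : ℝ) (x : Fin n → ℝ) : ℝ :=
  (∑ j, |x j| ^ p) ^ (1 / p)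

/-- `A` is a signed permutation matrix: there are a permutation `σ` and signs
`ε_j ∈ {−1,+1}` with `A j k = ε j` if `k = σ j` and `A j k = 0` otherwise. -/
def IsSignedPermMatrix {n : ℕ} (A : Matrix (Fin n) (Fin n) ℝ) : Prop :=
  ∃ σ : Equiv.Perm (Fin n), ∃ ε : Fin n → ℝ,
    (∀ j, ε j = 1 ∨ ε j = -1) ∧ ∀ j k, A j k = if k = σ j then ε j else 0

/-- If `p` is an even integer with `p ≥ 4` and `A` preserves the `p`-norm of every
real vector, then `A` is a signed permutation matrix. -/
theorem even_pnorm_preserving_is_signed_perm {n : ℕ} (p : ℕ) (hpeven : Even p)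
    (hp4 : 4 ≤ p) (A : Matrix (Fin n) (Fin n) ℝ)
    (hA : ∀ x : Fin n → ℝ, pNorm (p : ℝ) (A.mulVec x) = pNorm (p : ℝ) x) :
    IsSignedPermMatrix A := by
  have hp0 : p ≠ 0 := by omega
  -- Step A
  have hsum : ∀ x : Fin n → ℝ, (∑ j, (A.mulVec x) j ^ p) = ∑ j, x j ^ p := by
    intro x
    have h := hA x
    unfold pNorm at h
    have e1 : ∀ y : Fin n → ℝ, (∑ j, |y j| ^ (p : ℝ)) = ∑ j, y j ^ p := by
      intro y
      refine Finset.sum_congr rfl fun j _ => ?_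
      rw [Real.rpow_natCast, Even.pow_abs hpeven]
    rw [e1, e1] at h
    have hn1 : (0:ℝ) ≤ ∑ j, (A.mulVec x) j ^ p :=
      Finset.sum_nonneg fun j _ => hpeven.pow_nonneg _
    have hn2 : (0:ℝ) ≤ ∑ j, x j ^ p :=
      Finset.sum_nonneg fun j _ => hpeven.pow_nonneg _
    have h2 := congrArg (fun z : ℝ => z ^ p) h
    simpa [one_div, Real.rpow_inv_natCast_pow hn1 hp0,
      Real.rpow_inv_natCast_pow hn2 hp0] using h2
  -- Step B: column sums
  have hcol : ∀ k, (∑ j, A j k ^ p) = 1 := by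
    intro k
    have h := hsum (Pi.single k 1)
    rw [Matrix.mulVec_single] at h
    simpa [Pi.single_apply, apply_ite (· ^ p), zero_pow hp0,
      Finset.sum_ite_eq'] using h
  -- Step C: rows have at most one nonzero entry
  have hrow : ∀ j k l, k ≠ l → A j k ≠ 0 → A j l = 0 := by
    intro j0 k l hkl hk
    have hev : ∀ t : ℝ, (∑ j, (A j k + A j l * t) ^ p) = 1 + t ^ p := by
      intro t
      have h := hsum ((Pi.single k 1 : Fin n → ℝ) + t • (Pi.single l 1 : Fin n → ℝ))
      have hx : A.mulVec ((Pi.single k 1 : Fin n → ℝ) + t • (Pi.single l 1 : Fin n → ℝ))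
          = fun j => A j k + A j l * t := by
        funext j
        simp only [Matrix.mulVec_add, Matrix.mulVec_smul, Matrix.mulVec_single,
          Pi.add_apply, Pi.smul_apply, smul_eq_mul, MulOpposite.op_one, one_smul, Matrix.col_apply]
        ring
      have hR : (∑ i, ((Pi.single k 1 : Fin n → ℝ) + t • (Pi.single l 1 : Fin n → ℝ)) i ^ p) = 1 + t ^ p := by
        rw [← Finset.sum_subset (Finset.subset_univ ({k, l} : Finset (Fin n)))
          (by
            intro i _ hi
            simp only [Finset.mem_insert, Finset.mem_singleton, not_or] at hi
            simp [Pi.single_apply, hi.1, hi.2, zero_pow hp0])]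
        rw [Finset.sum_insert (by simp [hkl]), Finset.sum_singleton]
        simp [Pi.single_apply, hkl, Ne.symm hkl, zero_pow hp0]
      rw [hx, hR] at h
      exact h
    have hpoly : (∑ j, (Polynomial.C (A j k) + Polynomial.C (A j l) * Polynomial.X) ^ p)
        = Polynomial.C 1 + Polynomial.X ^ p := by
      apply Polynomial.funext
      intro t
      simp only [Polynomial.eval_finset_sum, Polynomial.eval_pow, Polynomial.eval_add,
        Polynomial.eval_mul, Polynomial.eval_C, Polynomial.eval_X]
      simpa using hev t
    have hco := congrArg (fun q => Polynomial.coeff q 2) hpoly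
    simp only [Polynomial.finset_sum_coeff] at hco
    have hrhs : (Polynomial.C (1:ℝ) + Polynomial.X ^ p).coeff 2 = 0 := by
      rw [Polynomial.coeff_add, Polynomial.coeff_C, Polynomial.coeff_X_pow]
      simp only [OfNat.ofNat_ne_zero, if_false]
      have : ¬ (2 = p) := by omega
      simp [this]
    rw [hrhs] at hco
    have hsum0 : (∑ j, A j k ^ (p - 2) * A j l ^ 2 * (p.choose (p-2) : ℝ)) = 0 := by
      rw [← hco]
      exact Finset.sum_congr rfl fun j _ => (coeff_two_aux hp4 _ _).symm
    have hchoose : (0:ℝ) < (p.choose (p-2) : ℝ) := by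
      have : 0 < p.choose (p-2) := Nat.choose_pos (by omega)
      exact_mod_cast this
    have hterm : ∀ j ∈ Finset.univ, A j k ^ (p - 2) * A j l ^ 2 * (p.choose (p-2) : ℝ) = 0 := by
      rw [← Finset.sum_eq_zero_iff_of_nonneg]
      · exact hsum0
      · intro j _
        have h1 : (0:ℝ) ≤ A j k ^ (p - 2) :=
          (Even.tsub hpeven even_two).pow_nonneg _
        have h2 : (0:ℝ) ≤ A j l ^ 2 := sq_nonneg _
        positivity
    have h0 := hterm j0 (Finset.mem_univ _)
    have hne : A j0 k ^ (p - 2) ≠ 0 := pow_ne_zero _ hk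
    have hsq : A j0 l ^ 2 = 0 := by
      rcases mul_eq_zero.mp ((mul_eq_zero.mp h0).resolve_right hchoose.ne') with h | h
      · exact absurd h hne
      · exact h
    exact pow_eq_zero_iff (two_ne_zero) |>.mp hsq
  -- Step D: every column has a nonzero entry
  have hex : ∀ k, ∃ j, A j k ≠ 0 := by
    intro k
    by_contra h
    push_neg at h
    have hc := hcol k
    rw [Finset.sum_eq_zero (fun j _ => by rw [h j, zero_pow hp0])] at hc
    norm_num at hc
  choose ρ hρ using hex
  have hinj : Function.Injective ρ := by
    intro k k' h
    by_contra hne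
    exact hρ k' (by rw [← h]; exact hrow (ρ k) k k' hne (hρ k))
  have hbij : Function.Bijective ρ := Finite.injective_iff_bijective.mp hinj
  let e : Equiv.Perm (Fin n) := Equiv.ofBijective ρ hbij
  have hdiag : ∀ j, A j (e.symm j) ≠ 0 := by
    intro j
    have h1 : ρ (e.symm j) = j := e.apply_symm_apply j
    have h2 := hρ (e.symm j)
    rwa [h1] at h2
  have hunit : ∀ j, A j (e.symm j) ^ p = 1 := by
    intro j
    have h := hcol (e.symm j)
    rw [Finset.sum_eq_single j] at h
    · exact h
    · intro j' _ hj'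
      have hne : e.symm j' ≠ e.symm j := fun hh => hj' (e.symm.injective hh)
      rw [hrow j' (e.symm j') (e.symm j) hne (hdiag j'), zero_pow hp0]
    · intro h'
      exact absurd (Finset.mem_univ j) h'
  refine ⟨e.symm, fun j => A j (e.symm j), fun j => ?_, fun j k => ?_⟩
  · rcases (pow_eq_one_iff_of_ne_zero hp0).mp (hunit j) with h | h
    · exact Or.inl h
    · exact Or.inr h.1
  · by_cases hk : k = e.symm j
    · simp [hk]
    · rw [if_neg hk]
      exact hrow j (e.symm j) k (Ne.symm hk) (hdiag j)
end

section
/- Let p be an odd positive integer and let A be a real n×n matrix such that ‖Ax‖_p = ‖x‖_p for all x ∈ ℝ^n. Then in each row of A all entries have the same sign; that is, for every row index j and all column indices k, l, one has A_{jk}·A_{jl} ≥ 0. Equivalently, for every vector x with nonnegative entries, the entries of Ax never change sign as x varies over nonnegative vectors. -/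
/-- If `p` is an odd positive integer and `A` preserves the `p`-norm of every real
vector, then in each row of `A` all entries have the same sign: for every row `j`
and all columns `k, l` we have `A j k * A j l ≥ 0`. -/
theorem odd_pnorm_preserving_rows_same_sign {n : ℕ} (p : ℕ) (hpodd : Odd p)
    (hppos : 0 < p) (A : Matrix (Fin n) (Fin n) ℝ)
    (hA : ∀ x : Fin n → ℝ, pNorm (p : ℝ) (A.mulVec x) = pNorm (p : ℝ) x) :
    ∀ j k l : Fin n, 0 ≤ A j k * A j l := by
  have hpne : p ≠ 0 := hppos.ne'
  -- nat-power version of the hypothesis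
  have hA' : ∀ x : Fin n → ℝ, ∑ j, |A.mulVec x j| ^ p = ∑ j, |x j| ^ p := by
    intro x
    have h := hA x
    unfold pNorm at h
    have h1 : ∀ y : Fin n → ℝ, (∑ j, |y j| ^ (p : ℝ)) = ∑ j, |y j| ^ p := by
      intro y; exact Finset.sum_congr rfl fun j _ => Real.rpow_natCast _ p
    rw [h1, h1] at h
    have ha : (0:ℝ) ≤ ∑ j, |A.mulVec x j| ^ p :=
      Finset.sum_nonneg fun j _ => pow_nonneg (abs_nonneg _) p
    have hb : (0:ℝ) ≤ ∑ j, |x j| ^ p :=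
      Finset.sum_nonneg fun j _ => pow_nonneg (abs_nonneg _) p
    have h2 := congrArg (fun y : ℝ => y ^ p) h
    simpa [one_div, Real.rpow_inv_natCast_pow ha hpne,
      Real.rpow_inv_natCast_pow hb hpne] using h2
  intro j k l
  rcases eq_or_ne k l with rfl | hkl
  · exact mul_self_nonneg _
  -- key identity
  have key : ∀ t : ℝ, ∑ i, |A i k + A i l * t| ^ p = 1 + |t| ^ p := by
    intro t
    have h := hA' ((Pi.single k 1 + Pi.single l t : Fin n → ℝ))
    rw [Matrix.mulVec_add, Matrix.mulVec_single, Matrix.mulVec_single] at h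
    have hL : ∑ i, |(MulOpposite.op (1:ℝ) • A.col k + MulOpposite.op t • A.col l) i| ^ p
        = ∑ i, |A i k + A i l * t| ^ p := by
      refine Finset.sum_congr rfl fun i _ => ?_
      simp [mul_one, mul_comm]
    have hR : ∑ i, |(Pi.single k 1 + Pi.single l t : Fin n → ℝ) i| ^ p
        = ∑ i, ((if i = k then (1:ℝ) else 0) + (if i = l then |t| ^ p else 0)) := by
      refine Finset.sum_congr rfl fun i _ => ?_
      by_cases hik : i = k <;> by_cases hil : i = l
      · exact absurd (hik ▸ hil) hkl
      · subst hik; simp [Pi.single_apply, hkl, Ne.symm hkl, hil]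
      · subst hil; simp [Pi.single_apply, hkl, Ne.symm hkl, hik]
      · simp [Pi.single_apply, hik, hil, zero_pow hpne]
    rw [hL, hR] at h
    rw [h, Finset.sum_add_distrib]
    simp [Finset.sum_ite_eq']
  -- column sums
  have hcol : ∑ i, |A i k| ^ p = 1 := by
    have := key 0
    simpa [zero_pow hpne] using this
  -- the polynomial identity
  classical
  set ε : Fin n → ℝ := fun i => if 0 < A i l then 1 else -1 with hε
  set q : Fin n → Polynomial ℝ := fun i =>
    if A i l = 0 then Polynomial.C (2 * |A i k| ^ p)
    else Polynomial.C (ε i) *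
      ((Polynomial.C (A i k) + Polynomial.C (A i l) * Polynomial.X) ^ p
        - (Polynomial.C (A i k) - Polynomial.C (A i l) * Polynomial.X) ^ p) with hq
  set Q : Polynomial ℝ := ∑ i, q i with hQ
  set R : Polynomial ℝ := Polynomial.C 2 + Polynomial.C 2 * Polynomial.X ^ p with hR
  obtain ⟨T, hT⟩ := Finset.exists_le
    ((Finset.univ : Finset (Fin n)).image fun i => |A i k| / |A i l|)
  have heval : ∀ t ∈ Set.Ioi (max T 0), Q.eval t = R.eval t := by
    intro t ht
    simp only [Set.mem_Ioi, lt_max_iff] at ht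
    have htT : T < t := lt_of_le_of_lt (le_max_left _ _) ht
    have ht0 : 0 < t := lt_of_le_of_lt (le_max_right _ _) ht
    -- per-term evaluation
    have hterm : ∀ i, (q i).eval t = |A i k + A i l * t| ^ p + |A i k - A i l * t| ^ p := by
      intro i
      by_cases hil : A i l = 0
      · simp [hq, hil, two_mul]
      · have hbound : |A i k| < t * |A i l| := by
          have h1 : |A i k| / |A i l| ≤ T :=
            hT _ (Finset.mem_image_of_mem _ (Finset.mem_univ i))
          have h2 : |A i k| / |A i l| < t := lt_of_le_of_lt h1 htT
          have h3 : 0 < |A i l| := abs_pos.mpr hil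
          calc |A i k| = (|A i k| / |A i l|) * |A i l| := by field_simp
            _ < t * |A i l| := by exact mul_lt_mul_of_pos_right h2 h3
        rcases lt_or_gt_of_ne hil with hneg | hpos
        · -- A i l < 0
          have habs : |A i l| = -(A i l) := abs_of_neg hneg
          rw [habs] at hbound
          have hu : A i k + A i l * t < 0 := by
            have h1 := le_abs_self (A i k)
            nlinarith
          have hv : 0 < A i k - A i l * t := by
            have h1 := neg_abs_le (A i k)
            nlinarith
          have hε' : ε i = -1 := by simp [hε, not_lt_of_gt hneg, hneg.not_gt]
          rw [hq]
          simp only [if_neg hil, Polynomial.eval_mul, Polynomial.eval_C,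
            Polynomial.eval_sub, Polynomial.eval_pow, Polynomial.eval_add,
            Polynomial.eval_mul, Polynomial.eval_X, hε']
          rw [abs_of_neg hu, abs_of_pos hv, Odd.neg_pow hpodd]
          ring
        · -- A i l > 0
          have habs : |A i l| = A i l := abs_of_pos hpos
          rw [habs] at hbound
          have hu : 0 < A i k + A i l * t := by
            have h1 := neg_abs_le (A i k)
            nlinarith
          have hv : A i k - A i l * t < 0 := by
            have h1 := le_abs_self (A i k)
            nlinarith
          have hε' : ε i = 1 := by simp [hε, hpos]
          rw [hq]
          simp only [if_neg hil, Polynomial.eval_mul, Polynomial.eval_C,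
            Polynomial.eval_sub, Polynomial.eval_pow, Polynomial.eval_add,
            Polynomial.eval_mul, Polynomial.eval_X, hε']
          rw [abs_of_pos hu, abs_of_neg hv, Odd.neg_pow hpodd]
          ring
    have hsum : ∑ i, ((q i).eval t)
        = ∑ i, (|A i k + A i l * t| ^ p + |A i k - A i l * t| ^ p) :=
      Finset.sum_congr rfl fun i _ => hterm i
    have hkey2 : ∑ i, (|A i k + A i l * t| ^ p + |A i k - A i l * t| ^ p)
        = 2 + 2 * t ^ p := by
      rw [Finset.sum_add_distrib, key t]
      have h2 : ∑ i, |A i k - A i l * t| ^ p = 1 + |t| ^ p := by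
        simpa [mul_neg, sub_eq_add_neg, abs_neg] using key (-t)
      rw [h2, abs_of_pos ht0]
      ring
    rw [hQ, Polynomial.eval_finset_sum, hsum, hkey2, hR]
    simp
  have hQR : Q = R := by
    refine Polynomial.eq_of_infinite_eval_eq _ _ ?_
    exact Set.Infinite.mono (fun t ht => heval t ht) (Set.Ioi_infinite (max T 0))
  -- evaluate at 0
  have h0 : ∑ i, (if A i l = 0 then 2 * |A i k| ^ p else 0) = 2 := by
    have e := congrArg (Polynomial.eval 0) hQR
    rw [hQ, hR, Polynomial.eval_finset_sum] at e
    have e2 : ∀ i : Fin n, Polynomial.eval 0 (q i)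
        = (if A i l = 0 then 2 * |A i k| ^ p else 0) := by
      intro i
      by_cases hil : A i l = 0
      · simp [hq, hil]
      · simp [hq, hil]
    rw [Finset.sum_congr rfl fun i _ => e2 i] at e
    simpa [zero_pow hpne] using e
  have h0' : ∑ i, (if A i l = 0 then |A i k| ^ p else 0) = 1 := by
    have hdouble : ∑ i, (if A i l = 0 then 2 * |A i k| ^ p else 0)
        = 2 * ∑ i, (if A i l = 0 then |A i k| ^ p else 0) := by
      rw [Finset.mul_sum]
      refine Finset.sum_congr rfl fun i _ => ?_
      by_cases hil : A i l = 0 <;> simp [hil]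
    rw [hdouble] at h0
    linarith
  -- conclude
  have hz : ∑ i, (|A i k| ^ p - (if A i l = 0 then |A i k| ^ p else 0)) = 0 := by
    rw [Finset.sum_sub_distrib, hcol, h0']
    ring
  have hnn : ∀ i ∈ Finset.univ,
      (0:ℝ) ≤ |A i k| ^ p - (if A i l = 0 then |A i k| ^ p else 0) := by
    intro i _
    by_cases hil : A i l = 0
    · simp [hil]
    · simp only [hil, if_false, sub_zero]
      exact pow_nonneg (abs_nonneg (A i k)) p
  have hjz := (Finset.sum_eq_zero_iff_of_nonneg hnn).mp hz j (Finset.mem_univ j)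
  by_cases hjl : A j l = 0
  · simp [hjl]
  · have : |A j k| ^ p = 0 := by simpa [hjl] using hjz
    have : A j k = 0 := by
      have := pow_eq_zero_iff hpne |>.mp this
      simpa using this
    simp [this]
end

section
/- Let p be an odd integer with p ≥ 3 and let A be a real n×n matrix such that ‖Ax‖_p = ‖x‖_p for all x ∈ ℝ^n. Then A is a signed permutation matrix. -/
/-- binomial lower bound: for `0 ≤ v ≤ u`,
`(u+v)^p + (u-v)^p ≥ 2u^p + 2 C(p,2) u^(p-2) v^2`. -/
lemma aux_binom_lb (p : ℕ) (hp : 3 ≤ p) (u v : ℝ) (hv : 0 ≤ v) (huv : v ≤ u) :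
    2*u^p + 2*(p.choose 2)*u^(p-2)*v^2 ≤ (u+v)^p + (u-v)^p := by
  have hu : 0 ≤ u := hv.trans huv
  have h1 : (u+v)^p = ∑ m ∈ Finset.range (p+1), u ^ m * v ^ (p - m) * p.choose m :=
    add_pow u v p
  have h2 : (u-v)^p = ∑ m ∈ Finset.range (p+1), u ^ m * (-v) ^ (p - m) * p.choose m := by
    rw [sub_eq_add_neg]; exact add_pow u (-v) p
  have hsum : (u+v)^p + (u-v)^p
      = ∑ m ∈ Finset.range (p+1), u ^ m * (v ^ (p - m) + (-v) ^ (p - m)) * p.choose m := by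
    rw [h1, h2, ← Finset.sum_add_distrib]
    congr 1; ext m; ring
  rw [hsum]
  have hnn : ∀ m ∈ Finset.range (p+1),
      (0:ℝ) ≤ u ^ m * (v ^ (p - m) + (-v) ^ (p - m)) * p.choose m := by
    intro m _
    rcases Nat.even_or_odd (p - m) with he | ho
    · rw [he.neg_pow]
      positivity
    · rw [ho.neg_pow]
      simp
  have hsub : ({p-2, p} : Finset ℕ) ⊆ Finset.range (p+1) := by
    intro m hm
    simp only [Finset.mem_insert, Finset.mem_singleton] at hm
    rcases hm with rfl | rfl <;> simp [Finset.mem_range] <;> omega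
  have hle := Finset.sum_le_sum_of_subset_of_nonneg hsub (fun m hm _ => hnn m hm)
  refine le_trans (le_of_eq ?_) hle
  rw [Finset.sum_pair (by omega : p - 2 ≠ p)]
  have e1 : p - (p-2) = 2 := by omega
  have e2 : p - p = 0 := by omega
  have e3 : p.choose (p-2) = p.choose 2 := by
    rw [← Nat.choose_symm (by omega : 2 ≤ p)]
  rw [e1, e2, e3]
  have : (-v)^2 = v^2 := by ring
  rw [this]
  simp [Nat.choose_self]
  ring

/-- `{|x+y|, |x-y|} = {|y|+|x|, |y|-|x|}` when `|x| ≤ |y|`. -/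
lemma aux_key_eq (q : ℕ) (x y : ℝ) (h : |x| ≤ |y|) :
    |x+y|^q + |x-y|^q = (|y|+|x|)^q + (|y|-|x|)^q := by
  rcases le_total 0 x with hx | hx <;> rcases le_total 0 y with hy | hy
  · rw [abs_of_nonneg hx, abs_of_nonneg hy] at *
    rw [abs_of_nonneg (by linarith : (0:ℝ) ≤ x + y), abs_of_nonpos (by linarith : x - y ≤ 0)]
    ring_nf
  · rw [abs_of_nonneg hx, abs_of_nonpos hy] at *
    rw [abs_of_nonpos (by linarith : x + y ≤ 0), abs_of_nonneg (by linarith : (0:ℝ) ≤ x - y)]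
    ring_nf
  · rw [abs_of_nonpos hx, abs_of_nonneg hy] at *
    rw [abs_of_nonneg (by linarith : (0:ℝ) ≤ x + y), abs_of_nonpos (by linarith : x - y ≤ 0)]
    ring_nf
  · rw [abs_of_nonpos hx, abs_of_nonpos hy] at *
    rw [abs_of_nonpos (by linarith : x + y ≤ 0), abs_of_nonneg (by linarith : (0:ℝ) ≤ x - y)]
    ring_nf

lemma aux_lower1 (p : ℕ) (hp : 3 ≤ p) (x y : ℝ) : 2*|y|^p ≤ |x+y|^p + |x-y|^p := by
  rcases le_total |x| |y| with h | h
  · rw [aux_key_eq p x y h]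
    have hb := aux_binom_lb p hp |y| |x| (abs_nonneg x) h
    have h2 : (0:ℝ) ≤ 2*(p.choose 2)*|y|^(p-2)*|x|^2 := by positivity
    nlinarith
  · have h2 : |x+y|^p + |x-y|^p = (|x|+|y|)^p + (|x|-|y|)^p := by
      rw [add_comm x y, abs_sub_comm x y]; exact aux_key_eq p y x h
    rw [h2]
    have h3 : (2*|y|)^p ≤ (|x|+|y|)^p :=
      pow_le_pow_left₀ (by positivity) (by linarith) p
    have h4 : (0:ℝ) ≤ (|x|-|y|)^p := by
      apply pow_nonneg; linarith
    have h5 : 2*|y|^p ≤ (2*|y|)^p := by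
      rw [mul_pow]
      have : (2:ℝ) ≤ 2^p := by
        calc (2:ℝ) = 2^1 := (pow_one 2).symm
        _ ≤ 2^p := by apply pow_le_pow_right₀ (by norm_num); omega
      nlinarith [pow_nonneg (abs_nonneg y) p]
    linarith

lemma aux_lower2 (p : ℕ) (hp : 3 ≤ p) (x y t : ℝ) (ht : 0 ≤ t) (h : |x| ≤ t*|y|) :
    2*(t*|y|)^p + 2*(p.choose 2)*(t*|y|)^(p-2)*x^2 ≤ |x + t*y|^p + |x - t*y|^p := by
  have habs : |t*y| = t*|y| := by rw [abs_mul, abs_of_nonneg ht]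
  rw [aux_key_eq p x (t*y) (by rw [habs]; exact h), habs]
  have hb := aux_binom_lb p hp (t*|y|) |x| (abs_nonneg x) h
  rw [sq_abs] at hb
  exact hb

/-- If `p` is an odd integer with `p ≥ 3` and `A` preserves the `p`-norm of every
real vector, then `A` is a signed permutation matrix. -/
theorem odd_pnorm_preserving_is_signed_perm {n : ℕ} (p : ℕ) (hpodd : Odd p)
    (hp3 : 3 ≤ p) (A : Matrix (Fin n) (Fin n) ℝ)
    (hA : ∀ x : Fin n → ℝ, pNorm (p : ℝ) (A.mulVec x) = pNorm (p : ℝ) x) :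
    IsSignedPermMatrix A := by
  have hp0 : p ≠ 0 := by omega
  -- Step 1: the sum-of-powers identity
  have hS : ∀ x : Fin n → ℝ, (∑ j, |A.mulVec x j| ^ p) = ∑ j, |x j| ^ p := by
    intro x
    have h := hA x
    unfold pNorm at h
    have e : ∀ y : Fin n → ℝ, ∑ j, |y j| ^ (p:ℝ) = ∑ j, |y j| ^ p := by
      intro y; simp [Real.rpow_natCast]
    rw [e, e, one_div] at h
    have h1 := congrArg (· ^ p) h
    rwa [Real.rpow_inv_natCast_pow
        (Finset.sum_nonneg fun j _ => pow_nonneg (abs_nonneg _) p) hp0,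
      Real.rpow_inv_natCast_pow
        (Finset.sum_nonneg fun j _ => pow_nonneg (abs_nonneg _) p) hp0] at h1
  -- Step 2: columns have unit p-norm
  have hcol : ∀ k, ∑ j, |A j k| ^ p = 1 := by
    intro k
    have h := hS (Pi.single k 1)
    simp only [Matrix.mulVec_single, Pi.smul_apply, Matrix.col_apply, op_smul_eq_mul, mul_one] at h
    rw [h]
    have e : ∀ j : Fin n, |(Pi.single k 1 : Fin n → ℝ) j| ^ p = if j = k then (1:ℝ) else 0 := by
      intro j
      rcases eq_or_ne j k with rfl | hj
      · simp
      · simp [Pi.single_apply, hj, zero_pow hp0]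
    rw [Finset.sum_congr rfl (fun j _ => e j), Finset.sum_ite_eq' Finset.univ k (fun _ => (1:ℝ))]
    simp
  -- Step 3: evaluation on `e_k + t e_l`
  have hx : ∀ k l : Fin n, k ≠ l → ∀ t : ℝ, ∑ j, |A j k + t * A j l| ^ p = 1 + |t| ^ p := by
    intro k l hkl t
    have h := hS (Pi.single k 1 + Pi.single l t)
    rw [Matrix.mulVec_add] at h
    simp only [Matrix.mulVec_single, Pi.smul_apply, Matrix.col_apply, op_smul_eq_mul, mul_one, Pi.add_apply] at h
    have e1 : ∀ j, |A j k + A j l * t| ^ p = |A j k + t * A j l| ^ p := by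
      intro j; rw [mul_comm]
    rw [Finset.sum_congr rfl (fun j _ => e1 j)] at h
    rw [h]
    have e : ∀ j : Fin n, |(Pi.single k 1 : Fin n → ℝ) j + (Pi.single l t : Fin n → ℝ) j| ^ p
        = (if j = k then (1:ℝ) else 0) + (if j = l then |t|^p else 0) := by
      intro j
      rcases eq_or_ne j k with rfl | hj
      · simp [Pi.single_apply, hkl, Ne.symm hkl]
      · rcases eq_or_ne j l with rfl | hj2
        · simp [Pi.single_apply, hj]
        · simp [Pi.single_apply, hj, hj2, zero_pow hp0]
    rw [Finset.sum_congr rfl (fun j _ => e j), Finset.sum_add_distrib,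
      Finset.sum_ite_eq' Finset.univ k (fun _ => (1:ℝ)),
      Finset.sum_ite_eq' Finset.univ l (fun _ => |t|^p)]
    simp
  -- Step 4: distinct columns have disjoint supports
  have hdisj : ∀ k l : Fin n, k ≠ l → ∀ j, A j k = 0 ∨ A j l = 0 := by
    intro k l hkl j0
    by_contra hcon
    push_neg at hcon
    obtain ⟨hk0, hl0⟩ := hcon
    set a := |A j0 k| with ha_def
    set b := |A j0 l| with hb_def
    have ha : 0 < a := abs_pos.mpr hk0
    have hb : 0 < b := abs_pos.mpr hl0
    have hC : (0:ℝ) < (p.choose 2 : ℝ) := by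
      have : 0 < p.choose 2 := Nat.choose_pos (by omega)
      exact_mod_cast this
    set E : ℝ := (p.choose 2 : ℝ) * b^(p-2) * a^2 with hE_def
    have hE : 0 < E := by positivity
    set D : ℝ := 2 / E with hD_def
    set t : ℝ := max (a/b) (max 1 (D+1)) with ht_def
    have ht1 : 1 ≤ t := le_trans (le_max_left 1 (D+1)) (le_max_right _ _)
    have ht0 : 0 ≤ t := by linarith
    have htD : D + 1 ≤ t := le_trans (le_max_right 1 (D+1)) (le_max_right _ _)
    have htab : a ≤ t * b := by
      have h1 : a / b ≤ t := le_max_left _ _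
      calc a = (a/b)*b := by field_simp
      _ ≤ t * b := by nlinarith
    have h1 := hx k l hkl t
    have h2 := hx k l hkl (-t)
    have e2 : ∀ j : Fin n, |A j k + (-t) * A j l| ^ p = |A j k - t * A j l| ^ p := by
      intro j; rw [neg_mul, ← sub_eq_add_neg]
    rw [Finset.sum_congr rfl (fun j _ => e2 j), abs_neg] at h2
    have habs_t : |t| = t := abs_of_nonneg ht0
    rw [habs_t] at h1 h2
    have hsum : ∑ j, (|A j k + t * A j l| ^ p + |A j k - t * A j l| ^ p) = 2 + 2*t^p := by
      rw [Finset.sum_add_distrib, h1, h2]; ring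
    have hge : ∀ j : Fin n,
        2*(t^p*|A j l|^p) + (if j = j0 then 2*(p.choose 2 : ℝ)*(t*b)^(p-2)*a^2 else 0)
          ≤ |A j k + t * A j l| ^ p + |A j k - t * A j l| ^ p := by
      intro j
      rcases eq_or_ne j j0 with rfl | hj
      · simp only [if_pos rfl]
        have := aux_lower2 p hp3 (A j k) (A j l) t ht0 (by rw [← ha_def, ← hb_def]; exact htab)
        calc 2*(t^p*|A j l|^p) + 2*(p.choose 2 : ℝ)*(t*b)^(p-2)*a^2
            = 2*(t*|A j l|)^p + 2*(p.choose 2 : ℝ)*(t*|A j l|)^(p-2)*(A j k)^2 := by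
              rw [hb_def, ha_def, sq_abs]; ring
        _ ≤ |A j k + t * A j l| ^ p + |A j k - t * A j l| ^ p := this
      · simp only [if_neg hj, add_zero]
        have := aux_lower1 p hp3 (A j k) (t * A j l)
        rw [abs_mul, habs_t, mul_pow] at this
        linarith
    have hlow := Finset.sum_le_sum (fun j (_ : j ∈ Finset.univ) => hge j)
    rw [hsum, Finset.sum_add_distrib, Finset.sum_ite_eq' Finset.univ j0
      (fun _ => 2*(p.choose 2 : ℝ)*(t*b)^(p-2)*a^2)] at hlow
    simp only [Finset.mem_univ, if_pos] at hlow
    have hsum2 : ∑ j, 2*(t^p*|A j l|^p) = 2*t^p := by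
      rw [← Finset.mul_sum, ← Finset.mul_sum, hcol l]; ring
    rw [hsum2] at hlow
    have key : (p.choose 2 : ℝ)*(t*b)^(p-2)*a^2 ≤ 1 := by linarith
    have hpow : t * b^(p-2) ≤ (t*b)^(p-2) := by
      rw [mul_pow]
      have h3 : t ≤ t^(p-2) := le_self_pow₀ ht1 (by omega)
      nlinarith [pow_pos hb (p-2), pow_pos (lt_of_lt_of_le one_pos ht1) (p-2)]
    have key2 : E * t ≤ 1 := by
      have hmul := mul_le_mul_of_nonneg_left hpow
        (by positivity : (0:ℝ) ≤ (p.choose 2 : ℝ) * a^2)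
      calc E * t = (p.choose 2 : ℝ) * a^2 * (t * b^(p-2)) := by rw [hE_def]; ring
      _ ≤ (p.choose 2 : ℝ) * a^2 * ((t*b)^(p-2)) := hmul
      _ = (p.choose 2 : ℝ)*(t*b)^(p-2)*a^2 := by ring
      _ ≤ 1 := key
    have hED : E * D = 2 := by rw [hD_def]; field_simp
    nlinarith [mul_le_mul_of_nonneg_left htD hE.le]
  -- Step 5: combinatorial conclusion
  have hex : ∀ k, ∃ j, A j k ≠ 0 := by
    intro k
    by_contra h
    push_neg at h
    have h1 := hcol k
    rw [Finset.sum_eq_zero (fun j _ => by rw [h j, abs_zero, zero_pow hp0])] at h1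
    norm_num at h1
  choose r hr using hex
  have hrinj : Function.Injective r := by
    intro k l hklr
    by_contra hkl
    rcases hdisj k l hkl (r k) with h | h
    · exact hr k h
    · rw [hklr] at h; exact hr l h
  let e : Fin n ≃ Fin n := Equiv.ofBijective r (Finite.injective_iff_bijective.mp hrinj)
  have hre : ∀ k, r k = e k := fun k => rfl
  have hdiag : ∀ j : Fin n, A j (e.symm j) ≠ 0 := by
    intro j
    have := hr (e.symm j)
    rwa [hre, Equiv.apply_symm_apply] at this
  have hone : ∀ j k : Fin n, k ≠ e.symm j → A j k = 0 := by
    intro j k hk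
    rcases hdisj k (e.symm j) hk j with h | h
    · exact h
    · exact absurd h (hdiag j)
  refine ⟨e.symm, fun j => A j (e.symm j), ?_, ?_⟩
  · intro j
    have hsum : ∑ m, |A m (e.symm j)| ^ p = |A j (e.symm j)| ^ p := by
      refine Finset.sum_eq_single_of_mem j (Finset.mem_univ j) (fun m _ hm => ?_)
      rw [hone m (e.symm j) (fun hc => hm ?_), abs_zero, zero_pow hp0]
      · exact (e.symm.injective hc).symm
    have h1 : |A j (e.symm j)| ^ p = 1 ^ p := by
      rw [← hsum, hcol (e.symm j), one_pow]
    have h2 : |A j (e.symm j)| = 1 :=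
      (pow_left_inj₀ (abs_nonneg _) zero_le_one hp0).mp h1
    rcases (abs_eq zero_le_one).mp h2 with h | h
    · exact Or.inl h
    · exact Or.inr h
  · intro j k
    split_ifs with h
    · rw [h]
    · exact hone j k h
end

section
/- Let A be a real n×n matrix such that ‖Ax‖_1 = ‖x‖_1 for all x ∈ ℝ^n (not merely for nonnegative x). Then A is a signed permutation matrix. -/
/-- If `A` preserves the `1`-norm `‖x‖₁ = Σ_j |x_j|` of every real vector
(not merely of nonnegative ones), then `A` is a signed permutation matrix. -/
theorem one_norm_preserving_is_signed_perm {n : ℕ} (A : Matrix (Fin n) (Fin n) ℝ)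
    (hA : ∀ x : Fin n → ℝ, ∑ j, |A.mulVec x j| = ∑ j, |x j|) :
    IsSignedPermMatrix A := by
  classical
  -- each column has 1-norm 1
  have hcol : ∀ k, ∑ j, |A j k| = 1 := by
    intro k
    have h := hA (Pi.single k 1)
    rw [Matrix.mulVec_single] at h
    simpa [Pi.single_apply, apply_ite abs] using h
  -- columns have disjoint supports
  have hdisj : ∀ k l, k ≠ l → ∀ j, A j k = 0 ∨ A j l = 0 := by
    intro k l hkl j
    have hp := hA (Pi.single k (1:ℝ) + Pi.single l (1:ℝ))
    have hm := hA (Pi.single k (1:ℝ) - Pi.single l (1:ℝ))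
    rw [Matrix.mulVec_add, Matrix.mulVec_single, Matrix.mulVec_single] at hp
    rw [Matrix.mulVec_sub, Matrix.mulVec_single, Matrix.mulVec_single] at hm
    have hrhsp : ∑ j, |(Pi.single k 1 + Pi.single l 1 : Fin n → ℝ) j| = 2 := by
      have : ∀ j, |(Pi.single k 1 + Pi.single l 1 : Fin n → ℝ) j|
          = (if j = k then (1:ℝ) else 0) + (if j = l then (1:ℝ) else 0) := by
        intro j
        by_cases hjk : j = k <;> by_cases hjl : j = l <;>
          simp_all [Pi.single_apply]
      rw [Finset.sum_congr rfl fun j _ => this j, Finset.sum_add_distrib]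
      simp
      norm_num
    have hrhsm : ∑ j, |(Pi.single k 1 - Pi.single l 1 : Fin n → ℝ) j| = 2 := by
      have : ∀ j, |(Pi.single k 1 - Pi.single l 1 : Fin n → ℝ) j|
          = (if j = k then (1:ℝ) else 0) + (if j = l then (1:ℝ) else 0) := by
        intro j
        by_cases hjk : j = k <;> by_cases hjl : j = l <;>
          simp_all [Pi.single_apply]
      rw [Finset.sum_congr rfl fun j _ => this j, Finset.sum_add_distrib]
      simp
      norm_num
    rw [hrhsp] at hp
    rw [hrhsm] at hm
    simp only [Pi.add_apply, Pi.sub_apply, Pi.smul_apply, op_smul_eq_mul, Matrix.col_apply, mul_one] at hp hm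
    -- pointwise inequality and sum equality
    have hle : ∀ i ∈ Finset.univ, |A i k + A i l| + |A i k - A i l|
        ≤ 2 * |A i k| + 2 * |A i l| := by
      intro i _
      have h1 := abs_add_le (A i k) (A i l)
      have h2 := abs_sub (A i k) (A i l)
      linarith
    have hsum : ∑ i, (|A i k + A i l| + |A i k - A i l|)
        = ∑ i, (2 * |A i k| + 2 * |A i l|) := by
      rw [Finset.sum_add_distrib, Finset.sum_add_distrib, hp, hm,
        ← Finset.mul_sum, ← Finset.mul_sum, hcol k, hcol l]
      norm_num
    have heq := (Finset.sum_eq_sum_iff_of_le hle).mp hsum j (Finset.mem_univ j)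
    have h1 := abs_add_le (A j k) (A j l)
    have h2 := abs_sub (A j k) (A j l)
    have e1 : |A j k + A j l| = |A j k| + |A j l| := by linarith
    have e2 : |A j k - A j l| = |A j k| + |A j l| := by linarith
    have hsq : (A j k + A j l) ^ 2 = (A j k - A j l) ^ 2 := by
      rw [← sq_abs (A j k + A j l), ← sq_abs (A j k - A j l), e1, e2]
    have : A j k * A j l = 0 := by nlinarith
    rcases mul_eq_zero.mp this with h | h
    · exact Or.inl h
    · exact Or.inr h
  -- supports
  set S : Fin n → Finset (Fin n) := fun k => Finset.univ.filter (fun j => A j k ≠ 0) with hS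
  have hSdisj : ∀ x ∈ Finset.univ, ∀ y ∈ Finset.univ, x ≠ y → Disjoint (S x) (S y) := by
    intro x _ y _ hxy
    rw [Finset.disjoint_left]
    intro j hjx hjy
    simp only [hS, Finset.mem_filter] at hjx hjy
    rcases hdisj x y hxy j with h | h
    · exact hjx.2 h
    · exact hjy.2 h
  have hScard1 : ∀ k, 1 ≤ (S k).card := by
    intro k
    rw [Nat.one_le_iff_ne_zero, Ne, Finset.card_eq_zero]
    intro hempty
    have : ∑ j, |A j k| = 0 := by
      apply Finset.sum_eq_zero
      intro j _
      have : A j k = 0 := by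
        by_contra h
        have : j ∈ S k := by simp [hS, h]
        simp [hempty] at this
      simp [this]
    rw [hcol k] at this
    norm_num at this
  have hsumcard : ∑ k, (S k).card = n := by
    have hle : ∑ k, (S k).card ≤ n := by
      rw [← Finset.card_biUnion hSdisj]
      calc (Finset.univ.biUnion S).card ≤ (Finset.univ : Finset (Fin n)).card :=
            Finset.card_le_card (Finset.subset_univ _)
        _ = n := Finset.card_univ.trans (Fintype.card_fin n)
    have hge : n ≤ ∑ k, (S k).card := by
      calc n = ∑ _k : Fin n, 1 := by simp
        _ ≤ ∑ k, (S k).card := Finset.sum_le_sum fun k _ => hScard1 k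
    omega
  have hcard1 : ∀ k, (S k).card = 1 := by
    intro k
    have hs : ∑ l : Fin n, 1 = ∑ l, (S l).card := by simp [hsumcard]
    have := (Finset.sum_eq_sum_iff_of_le (fun l _ => hScard1 l)).mp hs k (Finset.mem_univ k)
    omega
  choose τ hτ using fun k => Finset.card_eq_one.mp (hcard1 k)
  have hmemS : ∀ j k, A j k ≠ 0 ↔ j = τ k := by
    intro j k
    constructor
    · intro h
      have : j ∈ S k := by simp [hS, h]
      rw [hτ k] at this
      simpa using this
    · intro h
      have : τ k ∈ S k := by rw [hτ k]; simp
      simp only [hS, Finset.mem_filter] at this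
      rw [h]; exact this.2
  have hτinj : Function.Injective τ := by
    intro k l hkl
    by_contra hne
    have h1 : A (τ k) k ≠ 0 := (hmemS (τ k) k).mpr rfl
    have h2 : A (τ k) l ≠ 0 := (hmemS (τ k) l).mpr hkl
    rcases hdisj k l hne (τ k) with h | h
    · exact h1 h
    · exact h2 h
  have hτbij : Function.Bijective τ := (Finite.injective_iff_bijective).mp hτinj
  let e := Equiv.ofBijective τ hτbij
  refine ⟨e.symm, fun j => A j (e.symm j), ?_, ?_⟩
  · intro j
    have habs : |A j (e.symm j)| = 1 := by
      have h := hcol (e.symm j)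
      have hτe : τ (e.symm j) = j := e.apply_symm_apply j
      have : ∑ i, |A i (e.symm j)| = |A j (e.symm j)| := by
        rw [Finset.sum_eq_single j]
        · intro i _ hij
          have : A i (e.symm j) = 0 := by
            by_contra h'
            exact hij ((hmemS i (e.symm j)).mp h' |>.trans hτe)
          simp [this]
        · intro h'; simp at h'
      rw [this] at h
      exact h
    exact (abs_eq (by norm_num)).mp habs
  · intro j k
    by_cases hk : k = e.symm j
    · simp [hk]
    · rw [if_neg hk]
      by_contra h
      have := (hmemS j k).mp h
      apply hk
      rw [this]
      exact (e.symm_apply_apply k).symm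
end

section
/- Let B be a real n×n stochastic matrix (all entries nonnegative and each column summing to 1) such that ‖Bx‖_1 = ‖x‖_1 for all x ∈ ℝ^n (not just for nonnegative x). Then B is a permutation matrix. -/
/-!
Testing `B` on `eᵏ` shows that its columns sum to `1`, and testing on `eᵏ - eˡ` for `k ≠ l` gives
`∑ⱼ |Bⱼₖ - Bⱼₗ| = 2 = ∑ⱼ (Bⱼₖ + Bⱼₗ)`. Since `|a - b| ≤ a + b` for `a, b ≥ 0`, with equality only
if `a = 0` or `b = 0`, distinct columns of `B` have disjoint supports. Choosing a row in the support
of each column then gives an injective, hence bijective, map of columns to rows, so every column is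
supported on a single entry, which equals the column sum `1`.
-/

open Finset Matrix

lemma eq_zero_or_eq_zero_of_abs_sub_eq_add {a b : ℝ} (ha : 0 ≤ a) (hb : 0 ≤ b)
    (h : |a - b| = a + b) : a = 0 ∨ b = 0 := by
  rcases abs_cases (a - b) with ⟨hab, -⟩ | ⟨hab, -⟩
  · right; linarith
  · left; linarith

lemma sum_abs_single_sub_single {n : Type*} [Fintype n] [DecidableEq n] {k l : n} (hkl : k ≠ l) :
    ∑ i, |(Pi.single k 1 - Pi.single l 1 : n → ℝ) i| = 2 := by
  rw [sum_eq_add k l hkl] <;> simp +contextual [hkl, hkl.symm, one_add_one_eq_two]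

section OneNormPreserving

variable {m n : Type*} [Fintype m] [Fintype n] [DecidableEq n] {B : Matrix m n ℝ}

lemma sum_col_eq_one_of_one_norm_preserving (hnonneg : ∀ j k, 0 ≤ B j k)
    (hB : ∀ x : n → ℝ, ∑ j, |(B *ᵥ x) j| = ∑ j, |x j|) (k : n) : ∑ j, B j k = 1 := by
  simpa [mulVec_single_one, abs_of_nonneg (hnonneg _ k), Pi.single_apply, apply_ite]
    using hB (Pi.single k 1)

lemma eq_zero_or_eq_zero_of_one_norm_preserving (hnonneg : ∀ j k, 0 ≤ B j k)
    (hB : ∀ x : n → ℝ, ∑ j, |(B *ᵥ x) j| = ∑ j, |x j|) {k l : n} (hkl : k ≠ l) (j : m) :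
    B j k = 0 ∨ B j l = 0 := by
  have hcol := sum_col_eq_one_of_one_norm_preserving hnonneg hB
  have hsum : ∑ j, |B j k - B j l| = ∑ j, (B j k + B j l) := by
    have h := hB (Pi.single k 1 - Pi.single l 1)
    rw [mulVec_sub, mulVec_single_one, mulVec_single_one, sum_abs_single_sub_single hkl] at h
    rw [sum_add_distrib, hcol, hcol, one_add_one_eq_two]
    exact h
  have hle : ∀ j ∈ univ, |B j k - B j l| ≤ B j k + B j l := fun j _ => by
    simpa [abs_of_nonneg (hnonneg j _)] using abs_sub (B j k) (B j l)
  exact eq_zero_or_eq_zero_of_abs_sub_eq_add (hnonneg j k) (hnonneg j l)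
    ((sum_eq_sum_iff_of_le hle).mp hsum j (mem_univ j))

end OneNormPreserving

lemma exists_perm_of_col_supports_disjoint {ι : Type*} [Fintype ι] [DecidableEq ι]
    {B : Matrix ι ι ℝ} (hdisj : ∀ {k l : ι}, k ≠ l → ∀ j, B j k = 0 ∨ B j l = 0)
    (hcol : ∀ k, ∑ j, B j k = 1) :
    ∃ σ : Equiv.Perm ι, ∀ j k, B j k = if k = σ j then 1 else 0 := by
  have hex (k : ι) : ∃ j, B j k ≠ 0 := by
    by_contra! h
    simpa [h] using hcol k
  choose f hf using hex
  have hinj : Function.Injective f := fun k l hfkl => by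
    by_contra hkl
    rcases hdisj hkl (f k) with h | h
    · exact hf k h
    · exact hf l (hfkl ▸ h)
  have hbij : Function.Bijective f := Finite.injective_iff_bijective.mp hinj
  have hzero {j k} (hjk : j ≠ f k) : B j k = 0 := by
    obtain ⟨l, rfl⟩ := hbij.2 j
    have hkl : k ≠ l := by rintro rfl; exact hjk rfl
    exact (hdisj hkl (f l)).resolve_right (hf l)
  have hone (k : ι) : B (f k) k = 1 := by
    rw [← hcol k, sum_eq_single (f k) (fun j _ => hzero) (by simp)]
  refine ⟨(Equiv.ofBijective f hbij).symm, fun j k => ?_⟩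
  split_ifs with h <;> rw [Equiv.eq_symm_apply, Equiv.ofBijective_apply] at h
  · exact h ▸ hone k
  · exact hzero (Ne.symm h)

theorem stochastic_one_norm_preserving_is_perm_general {n : ℕ} (B : Matrix (Fin n) (Fin n) ℝ)
    (hnonneg : ∀ j k, 0 ≤ B j k)
    (hB : ∀ x : Fin n → ℝ, ∑ j, |B.mulVec x j| = ∑ j, |x j|) :
    ∃ σ : Equiv.Perm (Fin n), ∀ j k, B j k = if k = σ j then 1 else 0 :=
  exists_perm_of_col_supports_disjoint (eq_zero_or_eq_zero_of_one_norm_preserving hnonneg hB)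
    (sum_col_eq_one_of_one_norm_preserving hnonneg hB)

/-- If `B` is a real `n×n` stochastic matrix (all entries nonnegative, each column
summing to `1`) that preserves the `1`-norm `‖x‖₁ = Σ_j |x_j|` of every real vector
(not just of nonnegative ones), then `B` is a permutation matrix. -/
theorem stochastic_one_norm_preserving_is_perm {n : ℕ} (B : Matrix (Fin n) (Fin n) ℝ)
    (hnonneg : ∀ j k, 0 ≤ B j k) (hcol : ∀ k, ∑ j, B j k = 1)
    (hB : ∀ x : Fin n → ℝ, ∑ j, |B.mulVec x j| = ∑ j, |x j|) :
    ∃ σ : Equiv.Perm (Fin n), ∀ j k, B j k = if k = σ j then 1 else 0 :=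
  stochastic_one_norm_preserving_is_perm_general B hnonneg hB
end

section
/- Let p > 0 be a real number that is not an integer, and let A be a real n×n matrix such that ‖Ax‖_p = ‖x‖_p for all x ∈ ℝ^n. Then A is a signed permutation matrix. -/
/-!
Test `A` on `e_k` and on `e_k ± e_l`. The first gives `∑ⱼ |A j k|^p = 1` for every column, the
second then says that each pair of columns `u, v` satisfies Clarkson's identity
`∑ |u + v|^p + ∑ |u - v|^p = 2 ∑ |u|^p + 2 ∑ |v|^p`. For `p ≠ 2` the scalar inequality
`|a + b|^p + |a - b|^p ≶ 2|a|^p + 2|b|^p` (`<` for `p < 2`, `>` for `p > 2`) is strict as soon as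
`a b ≠ 0`, so two distinct columns have disjoint supports. Nonzero columns with pairwise disjoint
supports in a square matrix sit on a permutation, and the column sums force the entries to be `±1`.
-/

open Finset Matrix

namespace Real

lemma rpow_add_rpow_lt_rpow_add {q x y : ℝ} (hq : 1 < q) (hx : 0 < x) (hy : 0 < y) :
    x ^ q + y ^ q < (x + y) ^ q := by
  have hpow (z : ℝ) (hz : 0 < z) : z ^ q = z * z ^ (q - 1) := by
    rw [rpow_sub_one hz.ne', mul_div_cancel₀ _ hz.ne']
  have hmono (z : ℝ) (hz : 0 < z) (hzw : z < x + y) : z ^ (q - 1) < (x + y) ^ (q - 1) :=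
    rpow_lt_rpow hz.le hzw (by linarith)
  calc x ^ q + y ^ q = x * x ^ (q - 1) + y * y ^ (q - 1) := by rw [hpow x hx, hpow y hy]
    _ < x * (x + y) ^ (q - 1) + y * (x + y) ^ (q - 1) := by
      gcongr ?_ + ?_
      · exact mul_lt_mul_of_pos_left (hmono x hx (by linarith)) hx
      · exact mul_lt_mul_of_pos_left (hmono y hy (by linarith)) hy
    _ = (x + y) ^ q := by rw [hpow (x + y) (by positivity)]; ring

lemma rpow_add_lt_rpow_add_rpow {q x y : ℝ} (hq : q < 1) (hx : 0 < x) (hy : 0 < y) :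
    (x + y) ^ q < x ^ q + y ^ q := by
  have hpow (z : ℝ) (hz : 0 < z) : z ^ q = z * z ^ (q - 1) := by
    rw [rpow_sub_one hz.ne', mul_div_cancel₀ _ hz.ne']
  have hanti (z : ℝ) (hz : 0 < z) (hzw : z < x + y) : (x + y) ^ (q - 1) < z ^ (q - 1) :=
    rpow_lt_rpow_of_neg hz hzw (by linarith)
  calc (x + y) ^ q = x * (x + y) ^ (q - 1) + y * (x + y) ^ (q - 1) := by
        rw [hpow (x + y) (by positivity)]; ring
    _ < x * x ^ (q - 1) + y * y ^ (q - 1) := by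
      gcongr ?_ + ?_
      · exact mul_lt_mul_of_pos_left (hanti x hx (by linarith)) hx
      · exact mul_lt_mul_of_pos_left (hanti y hy (by linarith)) hy
    _ = x ^ q + y ^ q := by rw [hpow x hx, hpow y hy]

lemma abs_rpow_eq_sq_rpow_half (x p : ℝ) : |x| ^ p = (x ^ 2) ^ (p / 2) := by
  rw [← sq_abs, ← rpow_natCast, ← rpow_mul (abs_nonneg x)]
  ring_nf

end Real

open Real

noncomputable def clarksonGap (p a b : ℝ) : ℝ :=
  |a + b| ^ p + |a - b| ^ p - 2 * |a| ^ p - 2 * |b| ^ p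

section ClarksonGap

variable {p a b : ℝ}

lemma clarksonGap_zero_left (hp : p ≠ 0) (b : ℝ) : clarksonGap p 0 b = 0 := by
  simp [clarksonGap, zero_rpow hp, abs_neg]; ring

lemma clarksonGap_zero_right (hp : p ≠ 0) (a : ℝ) : clarksonGap p a 0 = 0 := by
  simp [clarksonGap, zero_rpow hp]; ring

/-- Write `|a ± b|^p = ((a ± b)²)^(p/2)` and use that the average of `(a + b)²` and `(a - b)²` is
`a² + b²`: concavity of `t ↦ t^(p/2)` and its strict subadditivity give the claim. -/
lemma clarksonGap_neg (hp₀ : 0 < p) (hp₂ : p < 2) (ha : a ≠ 0) (hb : b ≠ 0) :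
    clarksonGap p a b < 0 := by
  have hconc := (concaveOn_rpow (p := p / 2) (by positivity) (by linarith)).2
    (Set.mem_Ici.2 (sq_nonneg (a + b))) (Set.mem_Ici.2 (sq_nonneg (a - b)))
    (by norm_num : (0 : ℝ) ≤ 1 / 2) (by norm_num : (0 : ℝ) ≤ 1 / 2) (by norm_num)
  have hsub := rpow_add_lt_rpow_add_rpow (q := p / 2) (by linarith)
    (by positivity : 0 < a ^ 2) (by positivity : 0 < b ^ 2)
  simp only [smul_eq_mul] at hconc
  rw [show 1 / 2 * (a + b) ^ 2 + 1 / 2 * (a - b) ^ 2 = a ^ 2 + b ^ 2 by ring] at hconc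
  simp only [clarksonGap, abs_rpow_eq_sq_rpow_half _ p]
  linarith

lemma clarksonGap_pos (hp₂ : 2 < p) (ha : a ≠ 0) (hb : b ≠ 0) : 0 < clarksonGap p a b := by
  have hconv := (convexOn_rpow (p := p / 2) (by linarith)).2
    (Set.mem_Ici.2 (sq_nonneg (a + b))) (Set.mem_Ici.2 (sq_nonneg (a - b)))
    (by norm_num : (0 : ℝ) ≤ 1 / 2) (by norm_num : (0 : ℝ) ≤ 1 / 2) (by norm_num)
  have hsuper := rpow_add_rpow_lt_rpow_add (q := p / 2) (by linarith)
    (by positivity : 0 < a ^ 2) (by positivity : 0 < b ^ 2)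
  simp only [smul_eq_mul] at hconv
  rw [show 1 / 2 * (a + b) ^ 2 + 1 / 2 * (a - b) ^ 2 = a ^ 2 + b ^ 2 by ring] at hconv
  simp only [clarksonGap, abs_rpow_eq_sq_rpow_half _ p]
  linarith

lemma mul_clarksonGap_pos (hp₀ : 0 < p) (hp₂ : p ≠ 2) (ha : a ≠ 0) (hb : b ≠ 0) :
    0 < (p - 2) * clarksonGap p a b := by
  rcases hp₂.lt_or_gt with hlt | hgt
  · exact mul_pos_of_neg_of_neg (by linarith) (clarksonGap_neg hp₀ hlt ha hb)
  · exact mul_pos (by linarith) (clarksonGap_pos hgt ha hb)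

lemma mul_clarksonGap_nonneg (hp₀ : 0 < p) (a b : ℝ) : 0 ≤ (p - 2) * clarksonGap p a b := by
  rcases eq_or_ne a 0 with rfl | ha
  · rw [clarksonGap_zero_left hp₀.ne', mul_zero]
  rcases eq_or_ne b 0 with rfl | hb
  · rw [clarksonGap_zero_right hp₀.ne', mul_zero]
  rcases eq_or_ne p 2 with rfl | hp₂
  · rw [sub_self, zero_mul]
  · exact (mul_clarksonGap_pos hp₀ hp₂ ha hb).le

lemma eq_zero_or_eq_zero_of_sum_clarksonGap_eq_zero {ι : Type*} [Fintype ι] (hp₀ : 0 < p)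
    (hp₂ : p ≠ 2) {u v : ι → ℝ} (h : ∑ i, clarksonGap p (u i) (v i) = 0) (i : ι) :
    u i = 0 ∨ v i = 0 := by
  have hzero : ∑ i, (p - 2) * clarksonGap p (u i) (v i) = 0 := by rw [← mul_sum, h, mul_zero]
  have hi := (sum_eq_zero_iff_of_nonneg fun i _ => mul_clarksonGap_nonneg hp₀ _ _).1 hzero i
    (mem_univ i)
  by_contra! hne
  exact (mul_clarksonGap_pos hp₀ hp₂ hne.1 hne.2).ne' hi

end ClarksonGap

lemma sum_abs_rpow_eq_of_pNorm_eq {n : ℕ} {p : ℝ} (hp : p ≠ 0) {x y : Fin n → ℝ}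
    (h : pNorm p x = pNorm p y) : ∑ j, |x j| ^ p = ∑ j, |y j| ^ p :=
  (rpow_left_inj (sum_nonneg fun _ _ => by positivity) (sum_nonneg fun _ _ => by positivity)
    (one_div_ne_zero hp)).1 h

lemma Matrix.exists_perm_forall_ne_zero_iff {ι R : Type*} [Finite ι] [Zero R] {A : Matrix ι ι R}
    (hcol : ∀ k, ∃ j, A j k ≠ 0) (hrow : ∀ j k l, k ≠ l → A j k = 0 ∨ A j l = 0) :
    ∃ σ : Equiv.Perm ι, ∀ j k, A j k ≠ 0 ↔ k = σ j := by
  choose τ hτ using hcol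
  have hunique : ∀ {j k l}, A j k ≠ 0 → A j l ≠ 0 → k = l := fun hk hl =>
    by_contra fun hkl => (hrow _ _ _ hkl).elim hk hl
  have hτinj : τ.Injective := fun k l hkl => hunique (hτ k) (hkl ▸ hτ l)
  let e := Equiv.ofBijective τ hτinj.bijective_of_finite
  refine ⟨e.symm, fun j k => ⟨fun hjk => ?_, ?_⟩⟩
  · obtain ⟨m, rfl⟩ := e.surjective j
    rw [e.symm_apply_apply]
    exact hunique hjk (hτ m)
  · rintro rfl
    have hj : τ (e.symm j) = j := e.apply_symm_apply j
    simpa only [hj] using hτ (e.symm j)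

section PowerSumPreserving

variable {m ι : Type*} [Fintype m] [Fintype ι] [DecidableEq ι] {p : ℝ}

lemma sum_abs_rpow_pi_single (hp : p ≠ 0) (k : ι) (a : ℝ) :
    ∑ j, |(Pi.single k a : ι → ℝ) j| ^ p = |a| ^ p := by
  rw [Fintype.sum_eq_single k fun j hj => by simp [hj, zero_rpow hp], Pi.single_eq_same]

lemma sum_abs_rpow_pi_single_add_pi_single (hp : p ≠ 0) {k l : ι} (hkl : k ≠ l) (a b : ℝ) :
    ∑ j, |Pi.single k a j + Pi.single l b j| ^ p = |a| ^ p + |b| ^ p := by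
  rw [Fintype.sum_eq_add k l hkl fun j hj => by simp [hj.1, hj.2, zero_rpow hp]]
  simp [hkl, hkl.symm]

namespace Matrix

variable {A : Matrix m ι ℝ}

lemma sum_abs_rpow_col_eq_one (hp : p ≠ 0) (hA : ∀ x, ∑ j, |(A *ᵥ x) j| ^ p = ∑ j, |x j| ^ p)
    (k : ι) : ∑ j, |A j k| ^ p = 1 := by
  simpa [sum_abs_rpow_pi_single hp] using hA (Pi.single k 1)

lemma sum_abs_rpow_col_add_col (hp : p ≠ 0)
    (hA : ∀ x, ∑ j, |(A *ᵥ x) j| ^ p = ∑ j, |x j| ^ p) {k l : ι} (hkl : k ≠ l) (a b : ℝ) :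
    ∑ j, |a * A j k + b * A j l| ^ p = |a| ^ p + |b| ^ p := by
  have h := hA (Pi.single k a + Pi.single l b)
  simp only [mulVec_add, mulVec_single] at h
  simpa [sum_abs_rpow_pi_single_add_pi_single hp hkl] using h

lemma sum_clarksonGap_col_eq_zero (hp : p ≠ 0)
    (hA : ∀ x, ∑ j, |(A *ᵥ x) j| ^ p = ∑ j, |x j| ^ p) {k l : ι} (hkl : k ≠ l) :
    ∑ j, clarksonGap p (A j k) (A j l) = 0 := by
  have hadd := sum_abs_rpow_col_add_col hp hA hkl 1 1
  have hsub := sum_abs_rpow_col_add_col hp hA hkl 1 (-1)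
  simp only [one_mul, neg_one_mul, ← sub_eq_add_neg, abs_neg, abs_one, one_rpow] at hadd hsub
  simp only [clarksonGap, sum_sub_distrib, sum_add_distrib, ← mul_sum,
    sum_abs_rpow_col_eq_one hp hA, hadd, hsub]
  norm_num

end Matrix

end PowerSumPreserving

lemma isSignedPermMatrix_of_ne_zero_iff {n : ℕ} {p : ℝ} (hp : p ≠ 0)
    {A : Matrix (Fin n) (Fin n) ℝ} {σ : Equiv.Perm (Fin n)} (hσ : ∀ j k, A j k ≠ 0 ↔ k = σ j)
    (hcol : ∀ k, ∑ j, |A j k| ^ p = 1) : IsSignedPermMatrix A := by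
  refine ⟨σ, fun j => A j (σ j), fun j => ?_, fun j k => ?_⟩
  · have hpow : |A j (σ j)| ^ p = 1 ^ p := by
      rw [one_rpow, ← hcol (σ j), Fintype.sum_eq_single j fun i hi => ?_]
      rw [not_ne_iff.1 fun hne => hi (σ.injective ((hσ i _).1 hne).symm), abs_zero, zero_rpow hp]
    exact (abs_eq zero_le_one).1 ((rpow_left_inj (abs_nonneg _) zero_le_one hp).1 hpow)
  · split_ifs with hk
    · rw [hk]
    · exact not_ne_iff.1 (hk ∘ (hσ j k).1)

/-- If `p > 0` is a real number that is not an integer and `A` preserves the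
`p`-norm of every real vector, then `A` is a signed permutation matrix. -/
theorem nonintegral_pnorm_preserving_is_signed_perm {n : ℕ} (p : ℝ) (hppos : 0 < p)
    (hpnotint : ¬ ∃ m : ℤ, (m : ℝ) = p) (A : Matrix (Fin n) (Fin n) ℝ)
    (hA : ∀ x : Fin n → ℝ, pNorm p (A.mulVec x) = pNorm p x) :
    IsSignedPermMatrix A := by
  have hp₀ : p ≠ 0 := hppos.ne'
  have hp₂ : p ≠ 2 := fun h => hpnotint ⟨2, by rw [h]; norm_num⟩
  have hsum (x : Fin n → ℝ) : ∑ j, |(A *ᵥ x) j| ^ p = ∑ j, |x j| ^ p :=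
    sum_abs_rpow_eq_of_pNorm_eq hp₀ (hA x)
  have hcol := A.sum_abs_rpow_col_eq_one hp₀ hsum
  have hcol_ne (k : Fin n) : ∃ j, A j k ≠ 0 := by
    obtain ⟨j, -, hj⟩ := exists_ne_zero_of_sum_ne_zero (hcol k ▸ one_ne_zero)
    exact ⟨j, fun h => hj (by rw [h, abs_zero, zero_rpow hp₀])⟩
  have hrow (j k l : Fin n) (hkl : k ≠ l) : A j k = 0 ∨ A j l = 0 :=
    eq_zero_or_eq_zero_of_sum_clarksonGap_eq_zero hppos hp₂
      (A.sum_clarksonGap_col_eq_zero hp₀ hsum hkl) j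
  obtain ⟨σ, hσ⟩ := A.exists_perm_forall_ne_zero_iff hcol_ne hrow
  exact isSignedPermMatrix_of_ne_zero_iff hp₀ hσ hcol
end

section
/- Let p > 0 be any real number with p ≠ 2, and let A be a real n×n matrix such that ‖Ax‖_p = ‖x‖_p for all x ∈ ℝ^n. Then A is a signed permutation matrix. (In other words, for p ≠ 2 the only p-norm-preserving linear maps on ℝ^n are permutations composed with sign changes of the coordinates.) -/
open Real Set

/-! ### Auxiliary strict power inequalities -/

lemma my_rpow_superadd {q a b : ℝ} (hq : 1 < q) (ha : 0 < a) (hb : 0 < b) :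
    a ^ q + b ^ q < (a + b) ^ q := by
  have h1 : a ^ q < a * (a + b) ^ (q - 1) := by
    calc a ^ q = a * a ^ (q - 1) := by
          rw [← Real.rpow_one_add' (le_of_lt ha) (by intro h; norm_num at h; subst h; linarith)]
          ring_nf
    _ < a * (a + b) ^ (q - 1) := by
          apply mul_lt_mul_of_pos_left _ ha
          exact Real.rpow_lt_rpow ha.le (by linarith) (by linarith)
  have h2 : b ^ q < b * (a + b) ^ (q - 1) := by
    calc b ^ q = b * b ^ (q - 1) := by
          rw [← Real.rpow_one_add' (le_of_lt hb) (by intro h; norm_num at h; subst h; linarith)]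
          ring_nf
    _ < b * (a + b) ^ (q - 1) := by
          apply mul_lt_mul_of_pos_left _ hb
          exact Real.rpow_lt_rpow hb.le (by linarith) (by linarith)
  have h3 : (a + b) ^ q = (a + b) * (a + b) ^ (q - 1) := by
    rw [← Real.rpow_one_add' (by positivity) (by intro h; norm_num at h; subst h; linarith)]
    ring_nf
  rw [h3]; nlinarith [Real.rpow_pos_of_pos (show (0:ℝ) < a + b by linarith) (q-1)]

lemma my_rpow_subadd {q a b : ℝ} (hq0 : 0 < q) (hq : q < 1) (ha : 0 < a) (hb : 0 < b) :
    (a + b) ^ q < a ^ q + b ^ q := by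
  have hab : (0:ℝ) < a + b := by linarith
  have hne : (1:ℝ) + (q - 1) ≠ 0 := by intro h; norm_num at h; subst h; linarith
  have h1 : a * (a + b) ^ (q - 1) < a ^ q := by
    calc a * (a + b) ^ (q - 1) < a * a ^ (q - 1) := by
          apply mul_lt_mul_of_pos_left _ ha
          exact Real.rpow_lt_rpow_of_neg ha (by linarith) (by linarith)
    _ = a ^ q := by rw [← Real.rpow_one_add' ha.le hne]; ring_nf
  have h2 : b * (a + b) ^ (q - 1) < b ^ q := by
    calc b * (a + b) ^ (q - 1) < b * b ^ (q - 1) := by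
          apply mul_lt_mul_of_pos_left _ hb
          exact Real.rpow_lt_rpow_of_neg hb (by linarith) (by linarith)
    _ = b ^ q := by rw [← Real.rpow_one_add' hb.le hne]; ring_nf
  have h3 : (a + b) ^ q = (a + b) * (a + b) ^ (q - 1) := by
    rw [← Real.rpow_one_add' hab.le hne]; ring_nf
  rw [h3]; nlinarith

lemma my_aux_lt {q s : ℝ} (hq : q < 1) (hs0 : 0 < s) (hs1 : s < 1) :
    (1 + s) ^ q < (1 - s) ^ q + 2 * s ^ q := by
  rcases le_or_gt q 0 with h0 | h0
  · have e1 : (1 + s) ^ q ≤ 1 := Real.rpow_le_one_of_one_le_of_nonpos (by linarith) h0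
    have e2 : (1:ℝ) ≤ s ^ q := Real.one_le_rpow_of_pos_of_le_one_of_nonpos hs0 hs1.le h0
    have e3 : (0:ℝ) < (1 - s) ^ q := Real.rpow_pos_of_pos (by linarith) q
    have e4 : (0:ℝ) < s ^ q := Real.rpow_pos_of_pos hs0 q
    linarith
  · have e1 : (1 + s) ^ q < (1 - s) ^ q + (2 * s) ^ q := by
      have := my_rpow_subadd h0 hq (show (0:ℝ) < 1 - s by linarith) (by positivity : (0:ℝ) < 2*s)
      calc (1 + s) ^ q = ((1 - s) + 2 * s) ^ q := by ring_nf
      _ < (1 - s) ^ q + (2 * s) ^ q := this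
    have e2 : (2 * s) ^ q ≤ 2 * s ^ q := by
      rw [Real.mul_rpow (by norm_num) hs0.le]
      have : (2:ℝ) ^ q ≤ 2 := by
        calc (2:ℝ) ^ q ≤ 2 ^ (1:ℝ) := Real.rpow_le_rpow_of_exponent_le (by norm_num) hq.le
        _ = 2 := Real.rpow_one 2
      nlinarith [Real.rpow_pos_of_pos hs0 q]
    linarith

lemma my_aux_gt {q s : ℝ} (hq : 1 < q) (hs0 : 0 < s) (hs1 : s < 1) :
    (1 - s) ^ q + 2 * s ^ q < (1 + s) ^ q := by
  have e1 : (1 - s) ^ q + (2 * s) ^ q < (1 + s) ^ q := by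
    have := my_rpow_superadd hq (show (0:ℝ) < 1 - s by linarith) (by positivity : (0:ℝ) < 2*s)
    calc (1 - s) ^ q + (2 * s) ^ q < ((1 - s) + 2 * s) ^ q := this
    _ = (1 + s) ^ q := by ring_nf
  have e2 : 2 * s ^ q ≤ (2 * s) ^ q := by
    rw [Real.mul_rpow (by norm_num) hs0.le]
    have : (2:ℝ) ≤ 2 ^ q := by
      calc (2:ℝ) = 2 ^ (1:ℝ) := (Real.rpow_one 2).symm
      _ ≤ 2 ^ q := Real.rpow_le_rpow_of_exponent_le (by norm_num) hq.le
    nlinarith [Real.rpow_pos_of_pos hs0 q]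
  linarith

/-! ### The one-variable function and its sign -/

noncomputable def hfun (p : ℝ) (s : ℝ) : ℝ := (1 + s) ^ p + (1 - s) ^ p - 2 - 2 * s ^ p

lemma hfun_hasDeriv {p s : ℝ} (hs0 : 0 < s) (hs1 : s < 1) :
    HasDerivAt (hfun p)
      (p * (1 + s) ^ (p - 1) - p * (1 - s) ^ (p - 1) - 2 * (p * s ^ (p - 1))) s := by
  have h1 : HasDerivAt (fun t : ℝ => (1 + t) ^ p) (1 * p * (1 + s) ^ (p - 1)) s :=
    (HasDerivAt.const_add 1 (hasDerivAt_id s)).rpow_const (Or.inl (by norm_num; linarith))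
  have h2 : HasDerivAt (fun t : ℝ => (1 - t) ^ p) ((-1) * p * (1 - s) ^ (p - 1)) s :=
    (HasDerivAt.const_sub 1 (hasDerivAt_id s)).rpow_const (Or.inl (by norm_num; linarith))
  have h3 : HasDerivAt (fun t : ℝ => t ^ p) (p * s ^ (p - 1)) s :=
    Real.hasDerivAt_rpow_const (Or.inl hs0.ne')
  have := ((h1.add h2).sub_const 2).sub (h3.const_mul 2)
  exact this.congr_deriv (by ring)

lemma hfun_continuousOn {p : ℝ} (hp : 0 < p) : ContinuousOn (hfun p) (Icc 0 1) := by
  apply ContinuousOn.sub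
  apply ContinuousOn.sub
  · exact ((Real.continuous_rpow_const hp.le).comp
        (continuous_const.add continuous_id)).continuousOn.add
      ((Real.continuous_rpow_const hp.le).comp (continuous_const.sub continuous_id)).continuousOn
  · exact continuousOn_const
  · exact (continuous_const.mul (Real.continuous_rpow_const hp.le)).continuousOn

lemma hfun_zero {p : ℝ} (hp : 0 < p) : hfun p 0 = 0 := by
  simp [hfun, Real.zero_rpow hp.ne', Real.one_rpow]; norm_num

lemma hfun_neg {p s : ℝ} (hp : 0 < p) (hp2 : p < 2) (hs0 : 0 < s) (hs1 : s ≤ 1) :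
    hfun p s < 0 := by
  have anti : StrictAntiOn (hfun p) (Icc 0 1) := by
    apply strictAntiOn_of_deriv_neg (convex_Icc 0 1) (hfun_continuousOn hp)
    intro x hx
    rw [interior_Icc] at hx
    rw [(hfun_hasDeriv hx.1 hx.2).deriv]
    have := my_aux_lt (show p - 1 < 1 by linarith) hx.1 hx.2
    nlinarith
  have := anti (left_mem_Icc.2 zero_le_one) ⟨hs0.le, hs1⟩ hs0
  rwa [hfun_zero hp] at this

lemma hfun_pos {p s : ℝ} (hp2 : 2 < p) (hs0 : 0 < s) (hs1 : s ≤ 1) :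
    0 < hfun p s := by
  have hp : (0:ℝ) < p := by linarith
  have mono : StrictMonoOn (hfun p) (Icc 0 1) := by
    apply strictMonoOn_of_deriv_pos (convex_Icc 0 1) (hfun_continuousOn hp)
    intro x hx
    rw [interior_Icc] at hx
    rw [(hfun_hasDeriv hx.1 hx.2).deriv]
    have := my_aux_gt (show 1 < p - 1 by linarith) hx.1 hx.2
    nlinarith
  have := mono (left_mem_Icc.2 zero_le_one) ⟨hs0.le, hs1⟩ hs0
  rwa [hfun_zero hp] at this

/-! ### The key two-variable inequalities -/

lemma key_lt_aux {p x y : ℝ} (hp : 0 < p) (hp2 : p < 2) (hy : 0 < y) (hxy : y ≤ x) :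
    (x + y) ^ p + (x - y) ^ p < 2 * (x ^ p + y ^ p) := by
  have hx : 0 < x := lt_of_lt_of_le hy hxy
  set s := y / x with hs
  have hs0 : 0 < s := div_pos hy hx
  have hs1 : s ≤ 1 := (div_le_one hx).2 hxy
  have h := hfun_neg hp hp2 hs0 hs1
  have e1 : (x + y) ^ p = x ^ p * (1 + s) ^ p := by
    rw [← Real.mul_rpow hx.le (by linarith)]
    congr 1; rw [hs]; field_simp
  have e2 : (x - y) ^ p = x ^ p * (1 - s) ^ p := by
    rw [← Real.mul_rpow hx.le (by nlinarith [(div_le_one hx).2 hxy])]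
    congr 1; rw [hs]; field_simp
  have e3 : y ^ p = x ^ p * s ^ p := by
    rw [← Real.mul_rpow hx.le hs0.le]
    congr 1; rw [hs]; field_simp
  have hxp : 0 < x ^ p := Real.rpow_pos_of_pos hx p
  rw [e1, e2, e3]
  unfold hfun at h
  nlinarith

lemma key_gt_aux {p x y : ℝ} (hp2 : 2 < p) (hy : 0 < y) (hxy : y ≤ x) :
    2 * (x ^ p + y ^ p) < (x + y) ^ p + (x - y) ^ p := by
  have hx : 0 < x := lt_of_lt_of_le hy hxy
  set s := y / x with hs
  have hs0 : 0 < s := div_pos hy hx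
  have hs1 : s ≤ 1 := (div_le_one hx).2 hxy
  have h := hfun_pos hp2 hs0 hs1
  have e1 : (x + y) ^ p = x ^ p * (1 + s) ^ p := by
    rw [← Real.mul_rpow hx.le (by linarith)]
    congr 1; rw [hs]; field_simp
  have e2 : (x - y) ^ p = x ^ p * (1 - s) ^ p := by
    rw [← Real.mul_rpow hx.le (by nlinarith [(div_le_one hx).2 hxy])]
    congr 1; rw [hs]; field_simp
  have e3 : y ^ p = x ^ p * s ^ p := by
    rw [← Real.mul_rpow hx.le hs0.le]
    congr 1; rw [hs]; field_simp
  have hxp : 0 < x ^ p := Real.rpow_pos_of_pos hx p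
  rw [e1, e2, e3]
  unfold hfun at h
  nlinarith

lemma key_lt_core {p x y : ℝ} (hp : 0 < p) (hp2 : p < 2) (hx : 0 < x) (hy : 0 < y) :
    (x + y) ^ p + |x - y| ^ p < 2 * (x ^ p + y ^ p) := by
  rcases le_total y x with h | h
  · rw [abs_of_nonneg (by linarith)]; exact key_lt_aux hp hp2 hy h
  · rw [abs_sub_comm, abs_of_nonneg (by linarith), show x + y = y + x by ring]
    have := key_lt_aux hp hp2 hx h; linarith

lemma key_gt_core {p x y : ℝ} (hp2 : 2 < p) (hx : 0 < x) (hy : 0 < y) :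
    2 * (x ^ p + y ^ p) < (x + y) ^ p + |x - y| ^ p := by
  rcases le_total y x with h | h
  · rw [abs_of_nonneg (by linarith)]; exact key_gt_aux hp2 hy h
  · rw [abs_sub_comm, abs_of_nonneg (by linarith), show x + y = y + x by ring]
    have := key_gt_aux hp2 hx h; linarith

lemma abs_pair (a b : ℝ) : (|a + b| = |a| + |b| ∧ |a - b| = abs (|a| - |b|)) ∨
    (|a + b| = abs (|a| - |b|) ∧ |a - b| = |a| + |b|) := by
  rcases le_total 0 a with ha | ha <;> rcases le_total 0 b with hb | hb
  · left
    rw [abs_of_nonneg ha, abs_of_nonneg hb, abs_of_nonneg (by linarith : (0:ℝ) ≤ a + b)]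
    exact ⟨rfl, rfl⟩
  · right
    rw [abs_of_nonneg ha, abs_of_nonpos hb, abs_of_nonneg (by linarith : (0:ℝ) ≤ a - b)]
    constructor
    · rw [show a - -b = a + b by ring]
    · ring
  · right
    rw [abs_of_nonpos ha, abs_of_nonneg hb, abs_of_nonpos (by linarith : a - b ≤ 0)]
    constructor
    · rw [show -a - b = -(a+b) by ring, abs_neg]
    · ring
  · left
    rw [abs_of_nonpos ha, abs_of_nonpos hb, abs_of_nonpos (by linarith : a + b ≤ 0)]
    constructor
    · ring
    · rw [show -a - -b = -(a-b) by ring, abs_neg]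

lemma pair_lt {p a b : ℝ} (hp : 0 < p) (hp2 : p < 2) (ha : a ≠ 0) (hb : b ≠ 0) :
    |a + b| ^ p + |a - b| ^ p < 2 * (|a| ^ p + |b| ^ p) := by
  have hx : 0 < |a| := abs_pos.2 ha
  have hy : 0 < |b| := abs_pos.2 hb
  rcases abs_pair a b with ⟨h1, h2⟩ | ⟨h1, h2⟩ <;> rw [h1, h2]
  · exact key_lt_core hp hp2 hx hy
  · have := key_lt_core hp hp2 hx hy; linarith

lemma pair_gt {p a b : ℝ} (hp2 : 2 < p) (ha : a ≠ 0) (hb : b ≠ 0) :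
    2 * (|a| ^ p + |b| ^ p) < |a + b| ^ p + |a - b| ^ p := by
  have hx : 0 < |a| := abs_pos.2 ha
  have hy : 0 < |b| := abs_pos.2 hb
  rcases abs_pair a b with ⟨h1, h2⟩ | ⟨h1, h2⟩ <;> rw [h1, h2]
  · exact key_gt_core hp2 hx hy
  · have := key_gt_core hp2 hx hy; linarith

lemma pair_eq_of_zero {p a b : ℝ} (hp : 0 < p) (h : a = 0 ∨ b = 0) :
    |a + b| ^ p + |a - b| ^ p = 2 * (|a| ^ p + |b| ^ p) := by
  rcases h with rfl | rfl
  · simp [Real.zero_rpow hp.ne']; ring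
  · simp [Real.zero_rpow hp.ne']; ring

lemma pair_le {p a b : ℝ} (hp : 0 < p) (hp2 : p < 2) :
    |a + b| ^ p + |a - b| ^ p ≤ 2 * (|a| ^ p + |b| ^ p) := by
  rcases eq_or_ne a 0 with rfl | ha
  · exact le_of_eq (pair_eq_of_zero hp (Or.inl rfl))
  rcases eq_or_ne b 0 with rfl | hb
  · exact le_of_eq (pair_eq_of_zero hp (Or.inr rfl))
  exact (pair_lt hp hp2 ha hb).le

lemma pair_ge {p a b : ℝ} (hp : 0 < p) (hp2 : 2 < p) :
    2 * (|a| ^ p + |b| ^ p) ≤ |a + b| ^ p + |a - b| ^ p := by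
  rcases eq_or_ne a 0 with rfl | ha
  · exact ge_of_eq (pair_eq_of_zero hp (Or.inl rfl))
  rcases eq_or_ne b 0 with rfl | hb
  · exact ge_of_eq (pair_eq_of_zero hp (Or.inr rfl))
  exact (pair_gt hp2 ha hb).le

/-! ### Main theorem -/

/-- If `p > 0`, `p ≠ 2`, and `A` preserves the `p`-norm of every real vector, then
`A` is a signed permutation matrix: for `p ≠ 2` the only `p`-norm-preserving linear
maps on `ℝ^n` are permutations composed with sign changes of the coordinates. -/
theorem pnorm_preserving_is_signed_perm_of_ne_two {n : ℕ} (p : ℝ) (hppos : 0 < p)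
    (hpne : p ≠ 2) (A : Matrix (Fin n) (Fin n) ℝ)
    (hA : ∀ x : Fin n → ℝ, pNorm p (A.mulVec x) = pNorm p x) :
    IsSignedPermMatrix A := by
  -- Step 0: sums of p-th powers are preserved
  have hS : ∀ x : Fin n → ℝ, ∑ j, |A.mulVec x j| ^ p = ∑ j, |x j| ^ p := by
    intro x
    have h := hA x
    unfold pNorm at h
    rw [one_div] at h
    have h1 : (0:ℝ) ≤ ∑ j, |A.mulVec x j| ^ p :=
      Finset.sum_nonneg fun j _ => Real.rpow_nonneg (abs_nonneg _) p
    have h2 : (0:ℝ) ≤ ∑ j, |x j| ^ p :=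
      Finset.sum_nonneg fun j _ => Real.rpow_nonneg (abs_nonneg _) p
    exact (Real.rpow_left_inj h1 h2 (inv_ne_zero hppos.ne')).1 h
  -- single basis vectors
  have hsingle : ∀ (k : Fin n) (c : ℝ), ∑ j, |Pi.single k c j| ^ p = |c| ^ p := by
    intro k c
    rw [Finset.sum_eq_single k]
    · simp
    · intro b _ hb
      simp [Pi.single_eq_of_ne hb, Real.zero_rpow hppos.ne']
    · simp
  -- columns have unit p-sum
  have hcol : ∀ k : Fin n, ∑ j, |A j k| ^ p = 1 := by
    intro k
    have := hS (Pi.single k 1)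
    rw [hsingle k 1] at this
    simp only [Matrix.mulVec_single, mul_one] at this
    simpa using this
  -- a vector with at most one nonzero coordinate among two singles
  have hzer : ∀ (k l : Fin n), k ≠ l → ∀ j,
      (Pi.single k (1:ℝ) : Fin n → ℝ) j = 0 ∨ (Pi.single l (1:ℝ) : Fin n → ℝ) j = 0 := by
    intro k l hkl j
    rcases eq_or_ne j k with rfl | h
    · right; exact Pi.single_eq_of_ne hkl _
    · left; exact Pi.single_eq_of_ne h _
  -- two-column identity
  have hpairsum : ∀ k l : Fin n, k ≠ l →
      ∑ j, (|A j k + A j l| ^ p + |A j k - A j l| ^ p)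
        = ∑ j, 2 * (|A j k| ^ p + |A j l| ^ p) := by
    intro k l hkl
    have hplus := hS (Pi.single k 1 + Pi.single l 1)
    have hminus := hS (Pi.single k 1 - Pi.single l 1)
    have eplus : (A.mulVec (Pi.single k 1 + Pi.single l 1)) = fun j => A j k + A j l := by
      rw [Matrix.mulVec_add]
      funext j
      simp [Matrix.mulVec_single]
    have eminus : (A.mulVec (Pi.single k 1 - Pi.single l 1)) = fun j => A j k - A j l := by
      rw [Matrix.mulVec_sub]
      funext j
      simp [Matrix.mulVec_single]
    have rplus : ∑ j, |(Pi.single k 1 + Pi.single l 1 : Fin n → ℝ) j| ^ p = 2 := by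
      have : ∀ j, |(Pi.single k 1 + Pi.single l 1 : Fin n → ℝ) j| ^ p
          = |(Pi.single k (1:ℝ) : Fin n → ℝ) j| ^ p + |(Pi.single l (1:ℝ) : Fin n → ℝ) j| ^ p := by
        intro j
        rcases hzer k l hkl j with h | h <;>
          simp [h, Real.zero_rpow hppos.ne']
      rw [Finset.sum_congr rfl (fun j _ => this j), Finset.sum_add_distrib,
        hsingle k 1, hsingle l 1]
      norm_num
    have rminus : ∑ j, |(Pi.single k 1 - Pi.single l 1 : Fin n → ℝ) j| ^ p = 2 := by
      have : ∀ j, |(Pi.single k 1 - Pi.single l 1 : Fin n → ℝ) j| ^ p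
          = |(Pi.single k (1:ℝ) : Fin n → ℝ) j| ^ p + |(Pi.single l (1:ℝ) : Fin n → ℝ) j| ^ p := by
        intro j
        rcases hzer k l hkl j with h | h <;>
          simp [h, Real.zero_rpow hppos.ne']
      rw [Finset.sum_congr rfl (fun j _ => this j), Finset.sum_add_distrib,
        hsingle k 1, hsingle l 1]
      norm_num
    rw [eplus, rplus] at hplus
    rw [eminus, rminus] at hminus
    have lhs : ∑ j, (|A j k + A j l| ^ p + |A j k - A j l| ^ p) = 4 := by
      rw [Finset.sum_add_distrib, hplus, hminus]; norm_num
    have rhs : ∑ j, 2 * (|A j k| ^ p + |A j l| ^ p) = 4 := by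
      rw [← Finset.mul_sum, Finset.sum_add_distrib, hcol k, hcol l]; norm_num
    rw [lhs, rhs]
  -- disjoint supports
  have hdisj : ∀ k l : Fin n, k ≠ l → ∀ j, A j k = 0 ∨ A j l = 0 := by
    intro k l hkl j
    by_contra hcon
    push_neg at hcon
    obtain ⟨hak, hal⟩ := hcon
    rcases lt_or_gt_of_ne hpne with hlt | hgt
    · have hle : ∀ i ∈ Finset.univ, |A i k + A i l| ^ p + |A i k - A i l| ^ p
          ≤ 2 * (|A i k| ^ p + |A i l| ^ p) := fun i _ => pair_le hppos hlt
      have heq := (Finset.sum_eq_sum_iff_of_le hle).1 (hpairsum k l hkl) j (Finset.mem_univ j)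
      exact absurd heq (ne_of_lt (pair_lt hppos hlt hak hal))
    · have hle : ∀ i ∈ Finset.univ, 2 * (|A i k| ^ p + |A i l| ^ p)
          ≤ |A i k + A i l| ^ p + |A i k - A i l| ^ p := fun i _ => pair_ge hppos hgt
      have heq := (Finset.sum_eq_sum_iff_of_le hle).1 (hpairsum k l hkl).symm j (Finset.mem_univ j)
      exact absurd heq.symm (ne_of_gt (pair_gt hgt hak hal))
  classical
  -- supports
  set Sup : Fin n → Finset (Fin n) := fun k => Finset.univ.filter (fun j => A j k ≠ 0) with hSup
  have hmemSup : ∀ k j, j ∈ Sup k ↔ A j k ≠ 0 := by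
    intro k j; simp [hSup]
  have hne0 : ∀ k, (Sup k).Nonempty := by
    intro k
    by_contra h
    rw [Finset.not_nonempty_iff_eq_empty] at h
    have hz : ∀ j, A j k = 0 := by
      intro j
      by_contra hj
      have : j ∈ Sup k := (hmemSup k j).2 hj
      rw [h] at this
      simp at this
    have hc := hcol k
    rw [Finset.sum_eq_zero (fun j _ => by rw [hz j]; simp [Real.zero_rpow hppos.ne'])] at hc
    norm_num at hc
  have hdisj' : ∀ k l : Fin n, k ≠ l → Disjoint (Sup k) (Sup l) := by
    intro k l hkl
    rw [Finset.disjoint_left]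
    intro j hjk hjl
    rw [hmemSup] at hjk hjl
    rcases hdisj k l hkl j with h | h <;> contradiction
  have hcard1 : ∀ k, (Sup k).card = 1 := by
    have hsum : ∑ k, (Sup k).card = (Finset.univ.biUnion Sup).card :=
      (Finset.card_biUnion (fun k _ l _ h => hdisj' k l h)).symm
    have hle : (Finset.univ.biUnion Sup).card ≤ n := by
      simpa using Finset.card_le_univ (Finset.univ.biUnion Sup)
    have h1 : ∀ k ∈ Finset.univ, 1 ≤ (Sup k).card := fun k _ => (hne0 k).card_pos
    have h2 : ∑ _k : Fin n, 1 ≤ ∑ k, (Sup k).card := Finset.sum_le_sum h1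
    have h3 : ∑ _k : Fin n, 1 = n := by simp
    have h4 : ∑ _k : Fin n, 1 = ∑ k, (Sup k).card := le_antisymm h2 (by omega)
    intro k
    exact ((Finset.sum_eq_sum_iff_of_le h1).1 h4 k (Finset.mem_univ k)).symm
  choose τ hτ using fun k => Finset.card_eq_one.1 (hcard1 k)
  have hmem : ∀ k j, A j k ≠ 0 ↔ j = τ k := by
    intro k j
    constructor
    · intro h
      have : j ∈ Sup k := (hmemSup k j).2 h
      rw [hτ k] at this
      simpa using this
    · intro h
      subst h
      have : τ k ∈ Sup k := by rw [hτ k]; simp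
      exact (hmemSup k (τ k)).1 this
  have hinj : Function.Injective τ := by
    intro k l h
    by_contra hkl
    have h1 : A (τ k) k ≠ 0 := (hmem k (τ k)).2 rfl
    have h2 : A (τ k) l ≠ 0 := by rw [h]; exact (hmem l (τ l)).2 rfl
    rcases hdisj k l hkl (τ k) with h' | h' <;> contradiction
  have hbij : Function.Bijective τ := Finite.injective_iff_bijective.1 hinj
  let eτ : Equiv.Perm (Fin n) := Equiv.ofBijective τ hbij
  have heτ : ∀ k, eτ k = τ k := fun k => rfl
  refine ⟨eτ.symm, fun j => A j (eτ.symm j), ?_, ?_⟩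
  · intro j
    set k := eτ.symm j with hk
    have hτk : τ k = j := by
      have := eτ.apply_symm_apply j
      rwa [← hk, heτ] at this
    have hsum := hcol k
    rw [Finset.sum_eq_single j] at hsum
    · have habs : |A j k| = 1 := by
        rw [← Real.one_rpow p] at hsum
        exact (Real.rpow_left_inj (abs_nonneg _) zero_le_one hppos.ne').1 hsum
      rcases (abs_eq (by norm_num : (0:ℝ) ≤ 1)).1 habs with h | h
      · left; exact h
      · right; exact h
    · intro b _ hbj
      have hb0 : A b k = 0 := by
        by_contra h
        exact hbj (((hmem k b).1 h).trans hτk)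
      rw [hb0]
      simp [Real.zero_rpow hppos.ne']
    · simp
  · intro j k
    by_cases h : k = eτ.symm j
    · rw [h, if_pos rfl]
    · rw [if_neg h]
      by_contra hne
      apply h
      have hjτ : j = τ k := (hmem k j).1 hne
      rw [hjτ, ← heτ k, Equiv.symm_apply_apply]
end

section
/- Let p > 0 be a real number with p ≠ 2, and let A be a complex n×n matrix such that Σ_{j=1}^n |(Ax)_j|^p = Σ_{j=1}^n |x_j|^p for all x ∈ ℂ^n, where |·| denotes the complex modulus. Then A is a complex generalized permutation matrix with unit-modulus entries: there exist a permutation σ of {1,…,n} and complex numbers ε_j with |ε_j| = 1 such that A_{jk} = ε_j when k = σ(j) and A_{jk} = 0 otherwise. -/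
open Finset

lemma my_rpow_split {x q : ℝ} (hx : x ≠ 0) : x ^ q = x ^ (q - 1) * x := by
  rw [show q = q - 1 + 1 by ring, Real.rpow_add_one hx (q-1)]
  ring_nf

/-- strict subadditivity of `x ^ q` for `0 < q < 1`. -/
lemma my_strict_subadd {x y q : ℝ} (hx : 0 < x) (hy : 0 < y) (hq0 : 0 < q) (hq : q < 1) :
    (x + y) ^ q < x ^ q + y ^ q := by
  have hxy : (0:ℝ) < x + y := by linarith
  have h1 : (x + y) ^ q = x * (x + y) ^ (q - 1) + y * (x + y) ^ (q - 1) := by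
    rw [my_rpow_split hxy.ne']; ring
  have hx1 : x * (x + y) ^ (q - 1) < x * x ^ (q - 1) :=
    mul_lt_mul_of_pos_left
      (Real.rpow_lt_rpow_of_neg hx (by linarith) (by linarith)) hx
  have hy1 : y * (x + y) ^ (q - 1) < y * y ^ (q - 1) :=
    mul_lt_mul_of_pos_left
      (Real.rpow_lt_rpow_of_neg hy (by linarith) (by linarith)) hy
  have hx2 : x ^ q = x * x ^ (q - 1) := by rw [my_rpow_split hx.ne']; ring
  have hy2 : y ^ q = y * y ^ (q - 1) := by rw [my_rpow_split hy.ne']; ring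
  rw [h1, hx2, hy2]; linarith

lemma my_strict_superadd {x y q : ℝ} (hx : 0 < x) (hy : 0 < y) (hq : 1 < q) :
    x ^ q + y ^ q < (x + y) ^ q := by
  have hxy : (0:ℝ) < x + y := by linarith
  have h1 : (x + y) ^ q = x * (x + y) ^ (q - 1) + y * (x + y) ^ (q - 1) := by
    rw [my_rpow_split hxy.ne']; ring
  have hx1 : x * x ^ (q - 1) < x * (x + y) ^ (q - 1) :=
    mul_lt_mul_of_pos_left
      (Real.rpow_lt_rpow hx.le (by linarith) (by linarith)) hx
  have hy1 : y * y ^ (q - 1) < y * (x + y) ^ (q - 1) :=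
    mul_lt_mul_of_pos_left
      (Real.rpow_lt_rpow hy.le (by linarith) (by linarith)) hy
  have hx2 : x ^ q = x * x ^ (q - 1) := by rw [my_rpow_split hx.ne']; ring
  have hy2 : y ^ q = y * y ^ (q - 1) := by rw [my_rpow_split hy.ne']; ring
  rw [h1, hx2, hy2]; linarith

lemma my_subadd {x y q : ℝ} (hx : 0 ≤ x) (hy : 0 ≤ y) (hq0 : 0 < q) (hq : q < 1) :
    (x + y) ^ q ≤ x ^ q + y ^ q := by
  rcases hx.eq_or_lt with h | h
  · simp [← h, Real.zero_rpow hq0.ne']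
  rcases hy.eq_or_lt with h' | h'
  · simp [← h', Real.zero_rpow hq0.ne']
  exact (my_strict_subadd h h' hq0 hq).le

lemma my_superadd {x y q : ℝ} (hx : 0 ≤ x) (hy : 0 ≤ y) (hq : 1 < q) :
    x ^ q + y ^ q ≤ (x + y) ^ q := by
  rcases hx.eq_or_lt with h | h
  · simp [← h, Real.zero_rpow (by positivity : q ≠ 0)]
  rcases hy.eq_or_lt with h' | h'
  · simp [← h', Real.zero_rpow (by positivity : q ≠ 0)]
  exact (my_strict_superadd h h' hq).le

lemma my_pow_half (z : ℂ) (p : ℝ) : (‖z‖ * ‖z‖) ^ (p / 2) = ‖z‖ ^ p := by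
  have : ‖z‖ * ‖z‖ = ‖z‖ ^ (2:ℝ) := by
    rw [show (2:ℝ) = ((2:ℕ):ℝ) by norm_num, Real.rpow_natCast]; ring
  rw [this, ← Real.rpow_mul (norm_nonneg z), show 2 * (p/2) = p by ring]

section Key
variable {p : ℝ}

/-- For `0 < p < 2`: Clarkson-type inequality. -/
lemma key_le_lt2 (hp : 0 < p) (hp2 : p < 2) (a b : ℂ) :
    ‖a + b‖ ^ p + ‖a - b‖ ^ p
      ≤ 2 * ‖a‖ ^ p + 2 * ‖b‖ ^ p := by
  set q := p / 2 with hqdef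
  have hq0 : 0 < q := by positivity
  have hq1 : q < 1 := by rw [hqdef]; linarith
  set u := ‖a + b‖ * ‖a + b‖ with hu
  set v := ‖a - b‖ * ‖a - b‖ with hv
  set r := ‖a‖ * ‖a‖ with hr
  set s := ‖b‖ * ‖b‖ with hs
  have hpar : u + v = 2 * (r + s) := by
    have h := parallelogram_law_with_norm ℂ a b; simp only [sq] at h; rw [hu, hv, hr, hs]; linarith
  have hun : 0 ≤ u := mul_self_nonneg _
  have hvn : 0 ≤ v := mul_self_nonneg _
  have hrn : 0 ≤ r := mul_self_nonneg _
  have hsn : 0 ≤ s := mul_self_nonneg _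
  -- concavity step : u^q + v^q ≤ 2 * ((u+v)/2)^q
  have hconc := (Real.concaveOn_rpow hq0.le hq1.le).2 (Set.mem_Ici.2 hun)
      (Set.mem_Ici.2 hvn) (by norm_num : (0:ℝ) ≤ (1:ℝ)/2)
      (by norm_num : (0:ℝ) ≤ (1:ℝ)/2) (by norm_num)
  have hmid : ((1:ℝ)/2) • u + ((1:ℝ)/2) • v = r + s := by
    simp only [smul_eq_mul]; linarith
  rw [hmid] at hconc
  have hsub : (r + s) ^ q ≤ r ^ q + s ^ q := my_subadd hrn hsn hq0 hq1
  have e1 : u ^ q = ‖a + b‖ ^ p := my_pow_half _ _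
  have e2 : v ^ q = ‖a - b‖ ^ p := my_pow_half _ _
  have e3 : r ^ q = ‖a‖ ^ p := my_pow_half _ _
  have e4 : s ^ q = ‖b‖ ^ p := my_pow_half _ _
  simp only [smul_eq_mul] at hconc
  rw [← e1, ← e2, ← e3, ← e4]
  nlinarith [hconc, hsub]

lemma key_lt_lt2 (hp : 0 < p) (hp2 : p < 2) {a b : ℂ} (ha : a ≠ 0) (hb : b ≠ 0) :
    ‖a + b‖ ^ p + ‖a - b‖ ^ p
      < 2 * ‖a‖ ^ p + 2 * ‖b‖ ^ p := by
  set q := p / 2 with hqdef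
  have hq0 : 0 < q := by positivity
  have hq1 : q < 1 := by rw [hqdef]; linarith
  set u := ‖a + b‖ * ‖a + b‖ with hu
  set v := ‖a - b‖ * ‖a - b‖ with hv
  set r := ‖a‖ * ‖a‖ with hr
  set s := ‖b‖ * ‖b‖ with hs
  have hpar : u + v = 2 * (r + s) := by
    have h := parallelogram_law_with_norm ℂ a b; simp only [sq] at h; rw [hu, hv, hr, hs]; linarith
  have hun : 0 ≤ u := mul_self_nonneg _
  have hvn : 0 ≤ v := mul_self_nonneg _
  have hrp : 0 < r := by
    have := norm_pos_iff.2 ha; positivity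
  have hsp : 0 < s := by
    have := norm_pos_iff.2 hb; positivity
  have hconc := (Real.concaveOn_rpow hq0.le hq1.le).2 (Set.mem_Ici.2 hun)
      (Set.mem_Ici.2 hvn) (by norm_num : (0:ℝ) ≤ (1:ℝ)/2)
      (by norm_num : (0:ℝ) ≤ (1:ℝ)/2) (by norm_num)
  have hmid : ((1:ℝ)/2) • u + ((1:ℝ)/2) • v = r + s := by
    simp only [smul_eq_mul]; linarith
  rw [hmid] at hconc
  have hsub : (r + s) ^ q < r ^ q + s ^ q := my_strict_subadd hrp hsp hq0 hq1
  have e1 : u ^ q = ‖a + b‖ ^ p := my_pow_half _ _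
  have e2 : v ^ q = ‖a - b‖ ^ p := my_pow_half _ _
  have e3 : r ^ q = ‖a‖ ^ p := my_pow_half _ _
  have e4 : s ^ q = ‖b‖ ^ p := my_pow_half _ _
  simp only [smul_eq_mul] at hconc
  rw [← e1, ← e2, ← e3, ← e4]
  nlinarith [hconc, hsub]

lemma key_le_gt2 (hp2 : 2 < p) (a b : ℂ) :
    2 * ‖a‖ ^ p + 2 * ‖b‖ ^ p
      ≤ ‖a + b‖ ^ p + ‖a - b‖ ^ p := by
  set q := p / 2 with hqdef
  have hq1 : 1 < q := by rw [hqdef]; linarith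
  set u := ‖a + b‖ * ‖a + b‖ with hu
  set v := ‖a - b‖ * ‖a - b‖ with hv
  set r := ‖a‖ * ‖a‖ with hr
  set s := ‖b‖ * ‖b‖ with hs
  have hpar : u + v = 2 * (r + s) := by
    have h := parallelogram_law_with_norm ℂ a b; simp only [sq] at h; rw [hu, hv, hr, hs]; linarith
  have hun : 0 ≤ u := mul_self_nonneg _
  have hvn : 0 ≤ v := mul_self_nonneg _
  have hrn : 0 ≤ r := mul_self_nonneg _
  have hsn : 0 ≤ s := mul_self_nonneg _
  have hconv := (convexOn_rpow hq1.le).2 (Set.mem_Ici.2 hun)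
      (Set.mem_Ici.2 hvn) (by norm_num : (0:ℝ) ≤ (1:ℝ)/2)
      (by norm_num : (0:ℝ) ≤ (1:ℝ)/2) (by norm_num)
  have hmid : ((1:ℝ)/2) • u + ((1:ℝ)/2) • v = r + s := by
    simp only [smul_eq_mul]; linarith
  rw [hmid] at hconv
  have hsub : r ^ q + s ^ q ≤ (r + s) ^ q := my_superadd hrn hsn hq1
  have e1 : u ^ q = ‖a + b‖ ^ p := my_pow_half _ _
  have e2 : v ^ q = ‖a - b‖ ^ p := my_pow_half _ _
  have e3 : r ^ q = ‖a‖ ^ p := my_pow_half _ _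
  have e4 : s ^ q = ‖b‖ ^ p := my_pow_half _ _
  simp only [smul_eq_mul] at hconv
  rw [← e1, ← e2, ← e3, ← e4]
  nlinarith [hconv, hsub]

lemma key_lt_gt2 (hp2 : 2 < p) {a b : ℂ} (ha : a ≠ 0) (hb : b ≠ 0) :
    2 * ‖a‖ ^ p + 2 * ‖b‖ ^ p
      < ‖a + b‖ ^ p + ‖a - b‖ ^ p := by
  set q := p / 2 with hqdef
  have hq1 : 1 < q := by rw [hqdef]; linarith
  set u := ‖a + b‖ * ‖a + b‖ with hu
  set v := ‖a - b‖ * ‖a - b‖ with hv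
  set r := ‖a‖ * ‖a‖ with hr
  set s := ‖b‖ * ‖b‖ with hs
  have hpar : u + v = 2 * (r + s) := by
    have h := parallelogram_law_with_norm ℂ a b; simp only [sq] at h; rw [hu, hv, hr, hs]; linarith
  have hun : 0 ≤ u := mul_self_nonneg _
  have hvn : 0 ≤ v := mul_self_nonneg _
  have hrp : 0 < r := by have := norm_pos_iff.2 ha; positivity
  have hsp : 0 < s := by have := norm_pos_iff.2 hb; positivity
  have hconv := (convexOn_rpow hq1.le).2 (Set.mem_Ici.2 hun)
      (Set.mem_Ici.2 hvn) (by norm_num : (0:ℝ) ≤ (1:ℝ)/2)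
      (by norm_num : (0:ℝ) ≤ (1:ℝ)/2) (by norm_num)
  have hmid : ((1:ℝ)/2) • u + ((1:ℝ)/2) • v = r + s := by
    simp only [smul_eq_mul]; linarith
  rw [hmid] at hconv
  have hsub : r ^ q + s ^ q < (r + s) ^ q := my_strict_superadd hrp hsp hq1
  have e1 : u ^ q = ‖a + b‖ ^ p := my_pow_half _ _
  have e2 : v ^ q = ‖a - b‖ ^ p := my_pow_half _ _
  have e3 : r ^ q = ‖a‖ ^ p := my_pow_half _ _
  have e4 : s ^ q = ‖b‖ ^ p := my_pow_half _ _
  simp only [smul_eq_mul] at hconv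
  rw [← e1, ← e2, ← e3, ← e4]
  nlinarith [hconv, hsub]

end Key

/-- If `p > 0`, `p ≠ 2`, and the complex matrix `A` satisfies
`Σ_j |(Ax)_j|^p = Σ_j |x_j|^p` for all `x ∈ ℂ^n` (with `|·|` the complex modulus),
then `A` is a complex generalized permutation matrix with unit-modulus entries:
there are a permutation `σ` and `ε_j ∈ ℂ` with `|ε_j| = 1` such that
`A j k = ε j` if `k = σ j` and `A j k = 0` otherwise. -/
theorem complex_pnorm_preserving_is_unit_generalized_perm {n : ℕ} (p : ℝ)
    (hppos : 0 < p) (hpne : p ≠ 2) (A : Matrix (Fin n) (Fin n) ℂ)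
    (hA : ∀ x : Fin n → ℂ,
      ∑ j, ‖A.mulVec x j‖ ^ p = ∑ j, ‖x j‖ ^ p) :
    ∃ σ : Equiv.Perm (Fin n), ∃ ε : Fin n → ℂ,
      (∀ j, ‖ε j‖ = 1) ∧ ∀ j k, A j k = if k = σ j then ε j else 0 := by
  classical
  -- column sums are 1
  have hcol : ∀ k, ∑ j, ‖A j k‖ ^ p = 1 := by
    intro k
    have h := hA (Pi.single k 1)
    rw [Matrix.mulVec_single] at h
    simp only [Pi.smul_apply, MulOpposite.smul_eq_mul_unop, MulOpposite.unop_op, Matrix.col_apply, mul_one] at h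
    rw [h, Fintype.sum_eq_single k (fun j hj => by
      rw [Pi.single_eq_of_ne hj]
      simp [Real.zero_rpow hppos.ne'])]
    simp
  -- disjoint supports of columns
  have hdisj : ∀ k l, k ≠ l → ∀ j, A j k = 0 ∨ A j l = 0 := by
    intro k l hkl j
    by_contra hcon
    push_neg at hcon
    obtain ⟨ha, hb⟩ := hcon
    have hmv : ∀ (c d : ℂ), A.mulVec ((Pi.single k c + Pi.single l d : Fin n → ℂ))
        = fun j => A j k * c + A j l * d := by
      intro c d
      rw [Matrix.mulVec_add, Matrix.mulVec_single, Matrix.mulVec_single]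
      rfl
    have hRHS : ∀ (c d : ℂ), ∑ j, ‖(Pi.single k c + Pi.single l d : Fin n → ℂ) j‖ ^ p
        = ‖c‖ ^ p + ‖d‖ ^ p := by
      intro c d
      rw [Fintype.sum_eq_add k l hkl (fun x hx => by
        simp only [Pi.add_apply, Pi.single_eq_of_ne hx.1, Pi.single_eq_of_ne hx.2, add_zero]
        simp [Real.zero_rpow hppos.ne'])]
      simp [Pi.single_eq_of_ne hkl, Pi.single_eq_of_ne (Ne.symm hkl)]
    have h1 := hA (Pi.single k 1 + Pi.single l 1)
    rw [hmv, hRHS] at h1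
    simp only [mul_one] at h1
    have h2 := hA (Pi.single k 1 + Pi.single l (-1))
    rw [hmv, hRHS] at h2
    simp only [mul_one, mul_neg_one, map_neg, map_one, norm_neg, norm_one] at h2
    have h2' : ∑ j, ‖A j k - A j l‖ ^ p = 2 := by
      have : ∀ j, A j k + -A j l = A j k - A j l := fun j => by ring
      simp only [this] at h2
      rw [h2]; norm_num
    have h1' : ∑ j, ‖A j k + A j l‖ ^ p = 2 := by rw [h1]; norm_num
    have hsum : ∑ j, (‖A j k + A j l‖ ^ p + ‖A j k - A j l‖ ^ p)
        = ∑ j, (2 * ‖A j k‖ ^ p + 2 * ‖A j l‖ ^ p) := by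
      rw [Finset.sum_add_distrib, Finset.sum_add_distrib, h1', h2',
        ← Finset.mul_sum, ← Finset.mul_sum, hcol k, hcol l]
      norm_num
    rcases hpne.lt_or_gt with hplt | hpgt
    · have : ∑ j, (‖A j k + A j l‖ ^ p + ‖A j k - A j l‖ ^ p)
          < ∑ j, (2 * ‖A j k‖ ^ p + 2 * ‖A j l‖ ^ p) :=
        Finset.sum_lt_sum (fun i _ => key_le_lt2 hppos hplt _ _)
          ⟨j, Finset.mem_univ j, key_lt_lt2 hppos hplt ha hb⟩
      exact absurd hsum this.ne
    · have : ∑ j, (2 * ‖A j k‖ ^ p + 2 * ‖A j l‖ ^ p)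
          < ∑ j, (‖A j k + A j l‖ ^ p + ‖A j k - A j l‖ ^ p) :=
        Finset.sum_lt_sum (fun i _ => key_le_gt2 hpgt _ _)
          ⟨j, Finset.mem_univ j, key_lt_gt2 hpgt ha hb⟩
      exact absurd hsum this.ne'
  -- each column has a nonzero entry
  have hex : ∀ k, ∃ j, A j k ≠ 0 := by
    intro k
    by_contra hc
    push_neg at hc
    have := hcol k
    rw [Finset.sum_eq_zero (fun j _ => by
      rw [hc j]; simp [Real.zero_rpow hppos.ne'])] at this
    norm_num at this
  choose τ hτ using hex
  have hinj : Function.Injective τ := by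
    intro k l h
    by_contra hkl
    rcases hdisj k l hkl (τ k) with h0 | h0
    · exact hτ k h0
    · rw [h] at h0; exact hτ l h0
  have hbij : Function.Bijective τ := Finite.injective_iff_bijective.mp hinj
  let e : Equiv.Perm (Fin n) := Equiv.ofBijective τ hbij
  have happ : ∀ j, τ (e.symm j) = j := fun j => e.apply_symm_apply j
  have hzero : ∀ j k, k ≠ e.symm j → A j k = 0 := by
    intro j k hk
    rcases hdisj k (e.symm j) hk j with h0 | h0
    · exact h0
    · exfalso
      have := hτ (e.symm j)
      rw [happ j] at this
      exact this h0
  refine ⟨e.symm, fun j => A j (e.symm j), ?_, ?_⟩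
  · intro j
    have hc := hcol (e.symm j)
    rw [Fintype.sum_eq_single j (fun j' hj' => by
      rw [hzero j' (e.symm j) (fun h => hj' (e.symm.injective h).symm)]
      simp [Real.zero_rpow hppos.ne'])] at hc
    set x := ‖A j (e.symm j)‖ with hx
    have hx0 : 0 ≤ x := norm_nonneg _
    rcases lt_trichotomy x 1 with h | h | h
    · exact absurd hc (Real.rpow_lt_one hx0 h hppos).ne
    · exact h
    · exact absurd hc (Real.one_lt_rpow h hppos).ne'
  · intro j k
    by_cases hk : k = e.symm j
    · rw [if_pos hk, hk]
    · rw [if_neg hk]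
      exact hzero j k hk
end

section
/- Let A be a real n×n matrix such that ‖Ax‖_∞ = ‖x‖_∞ for all x ∈ ℝ^n, where ‖x‖_∞ = max_j |x_j| is the sup-norm. Then A is a signed permutation matrix. -/
/-!
A sup-norm contraction has all absolute row sums at most `1`, since that maximum is its
`ℓ^∞` operator norm. A sup-norm expansion sends the basis vector `e_k` to its `k`-th column,
so every column has an entry of absolute value at least `1`. Such an entry exhausts the row
budget, so it equals `±1` and is alone in its row; distinct columns therefore use distinct rows,
and for a square matrix this assignment of rows to columns is a permutation.
-/

open scoped Matrix.Norms.Operator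

namespace Matrix

variable {m n : Type*} [Fintype m] [Fintype n] (A : Matrix m n ℝ)

theorem sum_abs_le_one_of_norm_mulVec_le (hA : ∀ x, ‖A *ᵥ x‖ ≤ ‖x‖) (i : m) :
    ∑ j, |A i j| ≤ 1 := by
  have hnorm : ‖A‖ ≤ 1 := by
    rw [linfty_opNorm_eq_opNorm]
    exact ContinuousLinearMap.opNorm_le_bound _ zero_le_one fun x => by simpa using hA x
  have hrow : ∑ j, ‖A i j‖₊ ≤ ‖A‖₊ := by
    rw [linfty_opNNNorm_def]
    exact Finset.le_sup (f := fun i => ∑ j, ‖A i j‖₊) (Finset.mem_univ i)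
  calc ∑ j, |A i j| = ((∑ j, ‖A i j‖₊ : NNReal) : ℝ) := by simp
    _ ≤ ‖A‖ := NNReal.coe_le_coe.mpr hrow
    _ ≤ 1 := hnorm

theorem exists_one_le_abs_of_norm_le_norm_mulVec (hA : ∀ x, ‖x‖ ≤ ‖A *ᵥ x‖) (j : n) :
    ∃ i, 1 ≤ |A i j| := by
  classical
  have hcol : 1 ≤ ‖A.col j‖ := by
    simpa only [mulVec_single_one, Pi.norm_single, norm_one] using hA (Pi.single j 1)
  by_contra! hlt
  exact hcol.not_gt ((pi_norm_lt_iff zero_lt_one).mpr hlt)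

end Matrix

theorem eq_zero_of_sum_abs_le_abs {ι : Type*} [Fintype ι] {r : ι → ℝ} {j : ι}
    (h : ∑ k, |r k| ≤ |r j|) {k : ι} (hk : k ≠ j) : r k = 0 := by
  classical
  have hrest : ∑ l ∈ Finset.univ.erase j, |r l| = 0 := by
    have := Finset.add_sum_erase Finset.univ (fun l => |r l|) (Finset.mem_univ j)
    exact le_antisymm (by linarith) (Finset.sum_nonneg fun l _ => abs_nonneg _)
  exact abs_eq_zero.mp <| (Finset.sum_eq_zero_iff_of_nonneg fun l _ => abs_nonneg (r l)).mp
    hrest k (Finset.mem_erase.mpr ⟨hk, Finset.mem_univ k⟩)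

theorem isSignedPermMatrix_of_sum_abs_le_one {n : ℕ} {A : Matrix (Fin n) (Fin n) ℝ}
    (hrow : ∀ i, ∑ k, |A i k| ≤ 1) (hcol : ∀ k, ∃ i, 1 ≤ |A i k|) :
    IsSignedPermMatrix A := by
  choose f hf using hcol
  have hunit : ∀ k, |A (f k) k| = 1 := fun k =>
    le_antisymm ((Finset.single_le_sum (fun l _ => abs_nonneg _) (Finset.mem_univ k)).trans
      (hrow (f k))) (hf k)
  have hrow_zero : ∀ k l, l ≠ k → A (f k) l = 0 := fun k _ =>
    eq_zero_of_sum_abs_le_abs ((hrow (f k)).trans (hunit k).ge)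
  have hinj : Function.Injective f := by
    intro k l hkl
    by_contra hne
    have hzero : A (f l) l = 0 := hkl ▸ hrow_zero k l (Ne.symm hne)
    simpa [hzero] using hunit l
  let e : Equiv.Perm (Fin n) := Equiv.ofBijective f (Finite.injective_iff_bijective.mp hinj)
  have hfe : ∀ i, f (e.symm i) = i := Equiv.ofBijective_apply_symm_apply f _
  have hunit' : ∀ i, |A i (e.symm i)| = 1 := fun i => by
    simpa only [hfe] using hunit (e.symm i)
  refine ⟨e.symm, fun i => A i (e.symm i), fun i => (abs_eq zero_le_one).mp (hunit' i),
    fun i k => ?_⟩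
  split_ifs with hk
  · rw [hk]
  · simpa only [hfe] using hrow_zero (e.symm i) k hk

/-- If `A` preserves the sup-norm `‖x‖_∞ = max_j |x_j|` of every real vector
(here `‖·‖` is the sup norm on `Fin n → ℝ`), then `A` is a signed permutation
matrix. -/
theorem sup_norm_preserving_is_signed_perm {n : ℕ} (A : Matrix (Fin n) (Fin n) ℝ)
    (hA : ∀ x : Fin n → ℝ, ‖A.mulVec x‖ = ‖x‖) :
    IsSignedPermMatrix A :=
  isSignedPermMatrix_of_sum_abs_le_one
    (A.sum_abs_le_one_of_norm_mulVec_le fun x => (hA x).le)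
    (A.exists_one_le_abs_of_norm_le_norm_mulVec fun x => (hA x).ge)
end

section
/- Let d ≥ 3 be an odd integer and let p be a real number with p ≥ d². Then q := 2·Σ_{k=1}^{(d−1)/2} (cos(πk/d))^p ≤ 1/2. Consequently the probability q/(q+1) is bounded away from 1 (indeed q/(q+1) ≤ 1/3) whenever p ≥ d². -/
set_option maxHeartbeats 1000000

open Real

/-- Auxiliary: for `0 < x ≤ 2`, `cos x ≤ exp (-(x^2)/2)`. -/
lemma cos_le_exp_neg_sq_half {x : ℝ} (h0 : 0 < x) (h2 : x ≤ 2) :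
    Real.cos x ≤ Real.exp (-(x ^ 2) / 2) := by
  have hs : x / 2 - (x / 2) ^ 3 / 4 < Real.sin (x / 2) :=
    by have := Real.sin_gt_sub_cube (x := x / 2) (by linarith); nlinarith [pow_pos (half_pos h0) 3]
  have hx2 : x ^ 2 ≤ 4 := by nlinarith
  have hL : (0 : ℝ) ≤ x / 2 - (x / 2) ^ 3 / 4 := by
    nlinarith [mul_le_mul_of_nonneg_left hx2 h0.le]
  have hcos : Real.cos x = 1 - 2 * Real.sin (x / 2) ^ 2 := by
    have := Real.cos_two_mul (x / 2)
    have hpyth := Real.sin_sq_add_cos_sq (x / 2)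
    have hx : 2 * (x / 2) = x := by ring
    rw [hx] at this
    nlinarith
  have hexp1 : 1 - x ^ 2 / 4 ≤ Real.exp (-(x ^ 2) / 4) := by
    have := Real.add_one_le_exp (-(x ^ 2) / 4)
    linarith
  have hnn : (0 : ℝ) ≤ 1 - x ^ 2 / 4 := by nlinarith
  have hexp2 : (1 - x ^ 2 / 4) ^ 2 ≤ Real.exp (-(x ^ 2) / 2) := by
    have : Real.exp (-(x ^ 2) / 2) = Real.exp (-(x ^ 2) / 4) ^ 2 := by
      rw [← Real.exp_nat_mul]
      congr 1
      push_cast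
      ring
    rw [this]
    exact pow_le_pow_left₀ hnn hexp1 2
  have hsin2 : (x / 2 - (x / 2) ^ 3 / 4) ^ 2 ≤ Real.sin (x / 2) ^ 2 := by
    exact pow_le_pow_left₀ hL hs.le 2
  rw [hcos]
  nlinarith [sq_nonneg x, sq_nonneg (x ^ 2), pow_pos h0 6]

/-- Geometric sum formula specialized to ratio `1/5`. -/
lemma geom_fifth_sum_eq (m : ℕ) :
    ∑ k ∈ Finset.Icc 1 m, (1 / 5 : ℝ) ^ k = 1 / 4 - (1 / 4) * (1 / 5) ^ m := by
  induction m with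
  | zero => simp
  | succ n ih =>
    rw [Finset.sum_Icc_succ_top (by omega : 1 ≤ n + 1), ih, pow_succ]
    ring

lemma geom_fifth_sum_le (m : ℕ) :
    ∑ k ∈ Finset.Icc 1 m, (1 / 5 : ℝ) ^ k ≤ 1 / 4 := by
  rw [geom_fifth_sum_eq]
  have : (0:ℝ) ≤ (1/4) * (1/5)^m := by positivity
  linarith

/-- For odd `d ≥ 3` and real `p ≥ d²`, the quantity
`q = 2 Σ_{k=1}^{(d−1)/2} cos(πk/d)^p` satisfies `q ≤ 1/2`, and consequently the
probability `q/(q+1)` is at most `1/3`. -/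
theorem cos_pow_sum_small (d : ℕ) (hd : Odd d) (hd3 : 3 ≤ d) (p : ℝ)
    (hp : (d : ℝ) ^ 2 ≤ p) :
    (2 * ∑ k ∈ Finset.Icc 1 ((d - 1) / 2), Real.cos (π * k / d) ^ p) ≤ 1 / 2 ∧
    (2 * ∑ k ∈ Finset.Icc 1 ((d - 1) / 2), Real.cos (π * k / d) ^ p) /
        ((2 * ∑ k ∈ Finset.Icc 1 ((d - 1) / 2), Real.cos (π * k / d) ^ p) + 1)
      ≤ 1 / 3 := by
  have hπ := Real.pi_pos
  have hπ4 : π < 3.15 := Real.pi_lt_d2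
  have hπ3 : 3 < π := Real.pi_gt_three
  have hd0 : (0:ℝ) < d := by exact_mod_cast (by omega : 0 < d)
  set m := (d - 1) / 2 with hm
  -- each relevant angle lies in (0, π/2) and is at most 2
  have hang : ∀ k ∈ Finset.Icc 1 m, 0 < π * k / d ∧ π * k / d < π / 2 ∧ π * k / d ≤ 2 := by
    intro k hk
    simp only [Finset.mem_Icc] at hk
    have hk1 : (1:ℝ) ≤ k := by exact_mod_cast hk.1
    have hkd : 2 * k + 1 ≤ d := by omega
    have hkd' : 2 * (k:ℝ) + 1 ≤ d := by exact_mod_cast hkd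
    have hx0 : 0 < π * k / d := by
      apply div_pos (mul_pos hπ (by linarith)) hd0
    have hxlt : π * k / d < π / 2 := by
      rw [div_lt_div_iff₀ hd0 (by norm_num : (0:ℝ) < 2)]
      nlinarith
    exact ⟨hx0, hxlt, by nlinarith⟩
  have hcpos : ∀ k ∈ Finset.Icc 1 m, 0 < Real.cos (π * k / d) := by
    intro k hk
    obtain ⟨h0, h1, _⟩ := hang k hk
    exact Real.cos_pos_of_mem_Ioo ⟨by linarith, h1⟩
  have key : ∀ k ∈ Finset.Icc 1 m, Real.cos (π * k / d) ^ p ≤ (1/5:ℝ)^k := by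
    intro k hk
    obtain ⟨hx0, hxlt, hx2⟩ := hang k hk
    simp only [Finset.mem_Icc] at hk
    have hk1 : (1:ℝ) ≤ k := by exact_mod_cast hk.1
    have hcos := hcpos k (by simp only [Finset.mem_Icc]; exact hk)
    have hp0 : 0 ≤ p := le_trans (by positivity) hp
    have h1 : Real.cos (π * k / d) ^ p ≤ Real.exp (-((π * k / d) ^ 2) / 2) ^ p :=
      Real.rpow_le_rpow hcos.le (cos_le_exp_neg_sq_half hx0 hx2) hp0
    have h2 : Real.exp (-((π * k / d) ^ 2) / 2) ^ p
        = Real.exp (-((π * k / d) ^ 2) / 2 * p) := by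
      rw [Real.rpow_def_of_pos (Real.exp_pos _), Real.log_exp]
    have h3 : -((π * k / d) ^ 2) / 2 * p ≤ -((π * k / d) ^ 2) / 2 * ((d:ℝ)^2) := by
      apply mul_le_mul_of_nonpos_left hp
      nlinarith [sq_nonneg (π * (k:ℝ) / d)]
    have h4 : -((π * k / d) ^ 2) / 2 * ((d:ℝ)^2) = -(π^2 * (k:ℝ)^2) / 2 := by
      field_simp
    have h5 : -(π^2 * (k:ℝ)^2) / 2 ≤ (k:ℝ) * (-(π^2) / 2) := by
      have hkk : (k:ℝ) ≤ (k:ℝ)^2 := by nlinarith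
      nlinarith [mul_le_mul_of_nonneg_left hkk (sq_nonneg π)]
    have h6 : Real.exp ((k:ℝ) * (-(π^2) / 2)) = Real.exp (-(π^2) / 2) ^ k :=
      Real.exp_nat_mul _ k
    have h7 : Real.exp (-(π^2) / 2) ≤ 1/5 := by
      have h8 : (5:ℝ) ≤ Real.exp (π^2/2) := by
        have := Real.add_one_le_exp (π^2/2)
        nlinarith
      have h9 : Real.exp (-(π^2) / 2) * Real.exp (π^2/2) = 1 := by
        rw [← Real.exp_add, show -(π^2)/2 + π^2/2 = 0 by ring, Real.exp_zero]
      have h10 := mul_le_mul_of_nonneg_left h8 (Real.exp_pos (-(π^2)/2)).le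
      rw [h9] at h10
      nlinarith [Real.exp_pos (-(π^2)/2)]
    calc Real.cos (π * k / d) ^ p
        ≤ Real.exp (-((π * k / d) ^ 2) / 2) ^ p := h1
      _ = Real.exp (-((π * k / d) ^ 2) / 2 * p) := h2
      _ ≤ Real.exp ((k:ℝ) * (-(π^2) / 2)) := by
          apply Real.exp_le_exp.mpr; rw [← h4] at h5; linarith
      _ = Real.exp (-(π^2) / 2) ^ k := h6
      _ ≤ (1/5:ℝ)^k := pow_le_pow_left₀ (Real.exp_pos _).le h7 k
  have hsum : ∑ k ∈ Finset.Icc 1 m, Real.cos (π * k / d) ^ p ≤ 1/4 :=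
    le_trans (Finset.sum_le_sum key) (geom_fifth_sum_le m)
  have hq0 : 0 ≤ ∑ k ∈ Finset.Icc 1 m, Real.cos (π * k / d) ^ p :=
    Finset.sum_nonneg fun k hk => Real.rpow_nonneg (hcpos k hk).le p
  set S := ∑ k ∈ Finset.Icc 1 m, Real.cos (π * k / d) ^ p with hS
  constructor
  · linarith
  · rw [div_le_iff₀ (by linarith : (0:ℝ) < 2 * S + 1)]
    linarith
end
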